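/- arXiv:2510.13525 — 9 statements merged into one kernel-verified Lean document; each statement's English description precedes it below -/
import Mathlib

section
/- Let $X$ be a metric space with $0 < \mathcal{H}^p(X) < \infty$, let $0 < \theta < 1$, $0 < k < p$, and $\phi : X \to \mathbb{R}^k$ be Lipschitz. Then for $\mathcal{H}^p$-almost every $x \in X$ and every $r > 0$, there exists $y \in X$ with $y \neq x$, $d(x,y) < r$, and $|\phi(x) - \phi(y)| \leq \theta\, d(x,y)$. -/
/-!
Let `B` be the set of points `x` admitting a radius `δ` with `θ d(x,y) ≤ |φ x - φ y|` whenever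
`d(x,y) < δ`; every other point has the required `y`. For fixed `δ`, finiteness of `H^p(X)` gives a
countable cover of `X` by sets of diameter `< δ`, and on the trace of `B` on each of them `φ` has a
Lipschitz inverse. These traces therefore have Hausdorff dimension at most `k < p`, so they are
`H^p`-null, and so is `B`.
-/

open MeasureTheory Metric Set Module
open scoped NNReal ENNReal

theorem dimH_le_dimH_image_of_mul_dist_le {X Y : Type*} [MetricSpace X] [MetricSpace Y]
    {f : X → Y} {s : Set X} {c : ℝ} (hc : 0 < c)
    (h : ∀ x ∈ s, ∀ y ∈ s, c * dist x y ≤ dist (f x) (f y)) :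
    dimH s ≤ dimH (f '' s) := by
  have hanti : AntilipschitzWith c⁻¹.toNNReal (s.domRestrict f) :=
    AntilipschitzWith.of_le_mul_dist fun x y => by
      rw [Real.coe_toNNReal _ (inv_nonneg.2 hc.le), ← div_eq_inv_mul, le_div_iff₀' hc]
      exact h x x.2 y y.2
  calc dimH s = dimH (((↑) : s → X) '' univ) := by rw [image_univ, Subtype.range_coe]
    _ = dimH (univ : Set s) := isometry_subtype_coe.dimH_image univ
    _ ≤ dimH (s.domRestrict f '' univ) := hanti.le_dimH_image univ
    _ = dimH (f '' s) := by rw [image_univ, range_domRestrict]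

theorem exists_cover_ediam_le_of_hausdorffMeasure_ne_top {X : Type*} [EMetricSpace X]
    [MeasurableSpace X] [BorelSpace X] {d : ℝ} {s : Set X} (hs : μH[d] s ≠ ∞) {r : ℝ≥0∞}
    (hr : 0 < r) : ∃ t : ℕ → Set X, s ⊆ ⋃ n, t n ∧ ∀ n, ediam (t n) ≤ r := by
  by_contra! h
  refine hs (top_unique ?_)
  rw [Measure.hausdorffMeasure_apply]
  refine le_iSup₂_of_le r hr (le_iInf fun t => le_iInf fun hst => le_iInf fun hdiam => ?_)
  obtain ⟨n, hn⟩ := h t hst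
  exact absurd (hdiam n) hn.not_ge

theorem hausdorffMeasure_eq_zero_of_locally_mul_dist_le {X E : Type*} [MetricSpace X]
    [MeasurableSpace X] [BorelSpace X] [NormedAddCommGroup E] [NormedSpace ℝ E]
    [FiniteDimensional ℝ E] {p : ℝ} (hp : (finrank ℝ E : ℝ) < p) {s : Set X}
    (hs : μH[p] s ≠ ∞) {φ : X → E} {c δ : ℝ} (hc : 0 < c) (hδ : 0 < δ)
    (h : ∀ x ∈ s, ∀ y ∈ s, dist x y < δ → c * dist x y ≤ dist (φ x) (φ y)) :
    μH[p] s = 0 := by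
  lift p to ℝ≥0 using (Nat.cast_nonneg _).trans hp.le
  obtain ⟨t, hst, ht⟩ := exists_cover_ediam_le_of_hausdorffMeasure_ne_top hs
    (ENNReal.ofReal_pos.2 (half_pos hδ))
  have hpiece : ∀ n, μH[p] (s ∩ t n) = 0 := fun n => by
    refine hausdorffMeasure_of_dimH_lt ?_
    have hclose : ∀ x ∈ s ∩ t n, ∀ y ∈ s ∩ t n, c * dist x y ≤ dist (φ x) (φ y) :=
      fun x hx y hy => h x hx.1 y hy.1 <| by
        have := (edist_le_ofReal (half_pos hδ).le).1
          ((edist_le_ediam_of_mem hx.2 hy.2).trans (ht n))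
        linarith
    calc dimH (s ∩ t n) ≤ dimH (φ '' (s ∩ t n)) := dimH_le_dimH_image_of_mul_dist_le hc hclose
      _ ≤ dimH (univ : Set E) := dimH_mono (subset_univ _)
      _ = finrank ℝ E := Real.dimH_univ_eq_finrank E
      _ < p := mod_cast hp
  refine measure_mono_null (fun x hx => ?_) (measure_iUnion_null hpiece)
  obtain ⟨n, hn⟩ := mem_iUnion.1 (hst hx)
  exact mem_iUnion.2 ⟨n, hx, hn⟩

theorem stmt_0_general {X : Type*} [MetricSpace X] [MeasurableSpace X] [BorelSpace X]
    (p θ : ℝ) (k : ℕ) (hkp : (k : ℝ) < p)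
    (hθ0 : 0 < θ)
    (hX1 : μH[p] (univ : Set X) < ⊤)
    (φ : X → EuclideanSpace ℝ (Fin k)) :
    ∀ᵐ x ∂(μH[p] : Measure X), ∀ r > (0 : ℝ), ∃ y : X, y ≠ x ∧ dist x y < r ∧
      dist (φ x) (φ y) ≤ θ * dist x y := by
  set bad : ℕ → Set X := fun n =>
    {x | ∀ y, dist x y < 1 / (n + 1) → θ * dist x y ≤ dist (φ x) (φ y)}
  have hbad : ∀ n, μH[p] (bad n) = 0 := fun n =>
    hausdorffMeasure_eq_zero_of_locally_mul_dist_le (by simpa using hkp)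
      (ne_top_of_le_ne_top hX1.ne (measure_mono (subset_univ _))) hθ0 Nat.one_div_pos_of_nat
      fun x hx y _ => hx y
  rw [ae_iff]
  refine measure_mono_null (fun x hx => ?_) (measure_iUnion_null hbad)
  push Not at hx
  obtain ⟨r, hr, hfar⟩ := hx
  obtain ⟨n, hn⟩ := exists_nat_one_div_lt hr
  refine mem_iUnion.2 ⟨n, fun y hy => ?_⟩
  rcases eq_or_ne y x with rfl | hne
  · simp
  · exact (hfar y hne (hy.trans hn)).le

/-- For a metric space `X` with `0 < H^p(X) < ∞`, `0 < θ < 1`, `0 < k < p` and a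
Lipschitz map `φ : X → ℝ^k`, for `H^p`-a.e. `x` and every `r > 0` there is `y ≠ x`
with `d(x,y) < r` and `|φ(x) - φ(y)| ≤ θ d(x,y)`. -/
theorem stmt_0 {X : Type*} [MetricSpace X] [MeasurableSpace X] [BorelSpace X]
    (p θ : ℝ) (k : ℕ) (hk : 0 < k) (hkp : (k : ℝ) < p)
    (hθ0 : 0 < θ) (hθ1 : θ < 1)
    (hX0 : 0 < μH[p] (univ : Set X)) (hX1 : μH[p] (univ : Set X) < ⊤)
    (φ : X → EuclideanSpace ℝ (Fin k)) (L : ℝ≥0) (hφ : LipschitzWith L φ) :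
    ∀ᵐ x ∂(μH[p] : Measure X), ∀ r > (0 : ℝ), ∃ y : X, y ≠ x ∧ dist x y < r ∧
      dist (φ x) (φ y) ≤ θ * dist x y :=
  stmt_0_general p θ k hkp hθ0 hX1 φ
end

section
/- Let $C_1, \dots, C_n \subseteq \mathbb{R}^n$ be closed cones that are linearly independent, meaning that any choice of nonzero vectors $v_i \in C_i$ yields a linearly independent family. Then there is a constant $M > 0$ such that for every $\delta > 0$ and every $n \times n$ matrix $A$ whose $i$-th column $a_i$ lies in $C_i$ with $|a_i| \geq \delta$, the matrix $A$ is invertible and $\|A^{-1}\|_{op} \leq M \delta^{-1}$. -/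
/-!
The function `(u, x) ↦ ‖∑ xᵢ uᵢ‖` is continuous on the compact set of tuples of unit vectors
`uᵢ ∈ Cᵢ` paired with unit coefficient vectors `x`, and positive there by independence of the
cones, so it is bounded below by some `c > 0`. Writing `aᵢ = ‖aᵢ‖ uᵢ` with `‖aᵢ‖ ≥ δ` gives
`‖A x‖ ≥ c δ ‖x‖`, so `A` is injective, hence invertible, with `‖A⁻¹‖ ≤ (c δ)⁻¹`.
-/

open Metric Set

theorem EuclideanSpace.mul_norm_le_norm_of_mul_abs_le {ι : Type*} [Fintype ι] {δ : ℝ}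
    (hδ : 0 ≤ δ) {x y : EuclideanSpace ℝ ι} (h : ∀ i, δ * |x i| ≤ |y i|) : δ * ‖x‖ ≤ ‖y‖ := by
  rw [EuclideanSpace.norm_eq, EuclideanSpace.norm_eq, ← Real.sqrt_sq hδ,
    ← Real.sqrt_mul (sq_nonneg δ), Finset.mul_sum]
  gcongr with i
  simpa only [Real.norm_eq_abs, mul_pow] using pow_le_pow_left₀ (by positivity) (h i) 2

section

variable {ι E : Type*} [Fintype ι] [NormedAddCommGroup E] [NormedSpace ℝ E]

theorem exists_pos_mul_norm_le_norm_sum_smul {K : ι → Set E} (hK : ∀ i, IsCompact (K i))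
    (hindep : ∀ u : ι → E, (∀ i, u i ∈ K i) → LinearIndependent ℝ u) :
    ∃ c > 0, ∀ u : ι → E, (∀ i, u i ∈ K i) → ∀ x : EuclideanSpace ℝ ι,
      c * ‖x‖ ≤ ‖∑ i, x i • u i‖ := by
  set S := univ.pi K ×ˢ sphere (0 : EuclideanSpace ℝ ι) 1
  have hS : IsCompact S := (isCompact_univ_pi hK).prod (isCompact_sphere 0 1)
  have hcont : Continuous fun p : (ι → E) × EuclideanSpace ℝ ι => ‖∑ i, p.2 i • p.1 i‖ := by
    fun_prop
  have hpos : ∀ p ∈ S, 0 < ‖∑ i, p.2 i • p.1 i‖ := by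
    rintro ⟨u, x⟩ ⟨hu, hx⟩
    refine norm_pos_iff.2 fun hsum => ?_
    have hx0 : x = 0 := by
      ext i
      exact Fintype.linearIndependent_iff.1 (hindep u fun i => hu i trivial) _ hsum i
    simp [hx0] at hx
  obtain ⟨c, hc, hcS⟩ := hS.exists_forall_le' hcont.continuousOn hpos
  refine ⟨c, hc, fun u hu x => ?_⟩
  rcases eq_or_ne x 0 with rfl | hx
  · simp
  have hxpos : 0 < ‖x‖ := norm_pos_iff.2 hx
  have := hcS (u, ‖x‖⁻¹ • x) ⟨fun i _ => hu i, by simp [norm_smul, hxpos.ne']⟩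
  simp only [PiLp.smul_apply, smul_eq_mul, mul_smul, ← Finset.smul_sum, norm_smul, norm_inv,
    norm_norm] at this
  rwa [le_inv_mul_iff₀ hxpos, mul_comm] at this

theorem exists_pos_mul_mul_norm_le_norm_sum_smul_of_cone [ProperSpace E] {C : ι → Set E}
    (hclosed : ∀ i, IsClosed (C i)) (hcone : ∀ i, ∀ r : ℝ, 0 ≤ r → ∀ v ∈ C i, r • v ∈ C i)
    (hindep : ∀ v : ι → E, (∀ i, v i ∈ C i) → (∀ i, v i ≠ 0) → LinearIndependent ℝ v) :
    ∃ c > 0, ∀ δ > 0, ∀ a : ι → E, (∀ i, a i ∈ C i) → (∀ i, δ ≤ ‖a i‖) →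
      ∀ x : EuclideanSpace ℝ ι, c * δ * ‖x‖ ≤ ‖∑ i, x i • a i‖ := by
  obtain ⟨c, hc, hunit⟩ := exists_pos_mul_norm_le_norm_sum_smul (K := fun i => C i ∩ sphere 0 1)
    (fun i => (isCompact_sphere 0 1).inter_left (hclosed i))
    (fun u hu => hindep u (fun i => (hu i).1) fun i => ne_zero_of_mem_unit_sphere ⟨_, (hu i).2⟩)
  refine ⟨c, hc, fun δ hδ a ha hδa x => ?_⟩
  have hapos : ∀ i, 0 < ‖a i‖ := fun i => hδ.trans_le (hδa i)
  set u : ι → E := fun i => ‖a i‖⁻¹ • a i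
  set y : EuclideanSpace ℝ ι := WithLp.toLp 2 fun i => ‖a i‖ * x i
  have hu : ∀ i, u i ∈ C i ∩ sphere 0 1 := fun i =>
    ⟨hcone i _ (inv_nonneg.2 (hapos i).le) _ (ha i), by simp [u, norm_smul, (hapos i).ne']⟩
  have hsum : ∑ i, x i • a i = ∑ i, y i • u i :=
    Finset.sum_congr rfl fun i _ => by
      rw [smul_smul, mul_right_comm, mul_inv_cancel₀ (hapos i).ne', one_mul]
  have hy : δ * ‖x‖ ≤ ‖y‖ := EuclideanSpace.mul_norm_le_norm_of_mul_abs_le hδ.le fun i => by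
    simp only [y, abs_mul, abs_norm]
    gcongr
    exact hδa i
  calc c * δ * ‖x‖ = c * (δ * ‖x‖) := mul_assoc ..
    _ ≤ c * ‖y‖ := by gcongr
    _ ≤ ‖∑ i, y i • u i‖ := hunit u hu y
    _ = ‖∑ i, x i • a i‖ := by rw [hsum]

end

theorem Matrix.isUnit_and_norm_toEuclideanLin_inv_le {n : Type*} [Fintype n] [DecidableEq n]
    {A : Matrix n n ℝ} {m : ℝ} (hm : 0 < m)
    (h : ∀ x, m * ‖x‖ ≤ ‖toEuclideanLin A x‖) :
    IsUnit A ∧ ‖LinearMap.toContinuousLinearMap (toEuclideanLin A⁻¹)‖ ≤ m⁻¹ := by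
  have hinj : Function.Injective A.mulVec := by
    intro v w hvw
    have hle : m * ‖WithLp.toLp 2 (v - w)‖ ≤ 0 := by
      simpa [toLpLin_toLp, mulVec_sub, hvw] using h (WithLp.toLp 2 (v - w))
    have hzero : WithLp.toLp 2 (v - w) = 0 :=
      norm_le_zero_iff.1 (nonpos_of_mul_nonpos_right hle hm)
    simpa [sub_eq_zero] using hzero
  have hA : IsUnit A := mulVec_injective_iff_isUnit.1 hinj
  refine ⟨hA, ContinuousLinearMap.opNorm_le_bound _ (by positivity) fun w => ?_⟩
  have hw : toEuclideanLin A (toEuclideanLin A⁻¹ w) = w := by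
    simp [toLpLin_apply, mulVec_mulVec, mul_nonsing_inv _ ((isUnit_iff_isUnit_det A).1 hA)]
  rw [le_inv_mul_iff₀ hm]
  simpa [hw] using h (toEuclideanLin A⁻¹ w)

theorem Matrix.toEuclideanLin_apply_eq_sum_smul {m n : Type*} [Fintype n] [DecidableEq n]
    {A : Matrix m n ℝ} {a : n → EuclideanSpace ℝ m} (hA : ∀ i j, A i j = a j i)
    (x : EuclideanSpace ℝ n) : toEuclideanLin A x = ∑ j, x j • a j := by
  ext i
  simp [toLpLin_apply, mulVec, dotProduct, hA, mul_comm]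

theorem stmt_3_general (n : ℕ)
    (C : Fin n → Set (EuclideanSpace ℝ (Fin n)))
    (hclosed : ∀ i, IsClosed (C i))
    (hcone : ∀ i, ∀ r : ℝ, 0 ≤ r → ∀ v ∈ C i, r • v ∈ C i)
    (hindep : ∀ v : Fin n → EuclideanSpace ℝ (Fin n),
      (∀ i, v i ∈ C i) → (∀ i, v i ≠ 0) → LinearIndependent ℝ v) :
    ∃ M : ℝ, 0 < M ∧ ∀ δ : ℝ, 0 < δ →
      ∀ a : Fin n → EuclideanSpace ℝ (Fin n),
        (∀ i, a i ∈ C i) → (∀ i, δ ≤ ‖a i‖) →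
      ∀ A : Matrix (Fin n) (Fin n) ℝ, (∀ i j, A i j = a j i) →
        IsUnit A ∧
        ‖LinearMap.toContinuousLinearMap (Matrix.toEuclideanLin A⁻¹)‖ ≤ M / δ := by
  obtain ⟨c, hc, hbound⟩ := exists_pos_mul_mul_norm_le_norm_sum_smul_of_cone hclosed hcone hindep
  refine ⟨c⁻¹, inv_pos.2 hc, fun δ hδ a ha hδa A hA => ?_⟩
  have hlower : ∀ x, c * δ * ‖x‖ ≤ ‖Matrix.toEuclideanLin A x‖ := fun x => by
    rw [Matrix.toEuclideanLin_apply_eq_sum_smul hA]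
    exact hbound δ hδ a ha hδa x
  obtain ⟨hunit, hinv⟩ := Matrix.isUnit_and_norm_toEuclideanLin_inv_le (mul_pos hc hδ) hlower
  exact ⟨hunit, hinv.trans_eq (by rw [mul_inv, div_eq_mul_inv])⟩

/-- Matrix-inverse bound for linearly independent closed cones: there is `M > 0` so
that any matrix whose `i`-th column lies in `Cᵢ` with norm at least `δ` is invertible
with operator norm of the inverse at most `M/δ`. -/
theorem stmt_3 (n : ℕ) (hn : 0 < n)
    (C : Fin n → Set (EuclideanSpace ℝ (Fin n)))
    (hclosed : ∀ i, IsClosed (C i))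
    (hcone : ∀ i, ∀ r : ℝ, 0 ≤ r → ∀ v ∈ C i, r • v ∈ C i)
    (hindep : ∀ v : Fin n → EuclideanSpace ℝ (Fin n),
      (∀ i, v i ∈ C i) → (∀ i, v i ≠ 0) → LinearIndependent ℝ v) :
    ∃ M : ℝ, 0 < M ∧ ∀ δ : ℝ, 0 < δ →
      ∀ a : Fin n → EuclideanSpace ℝ (Fin n),
        (∀ i, a i ∈ C i) → (∀ i, δ ≤ ‖a i‖) →
      ∀ A : Matrix (Fin n) (Fin n) ℝ, (∀ i j, A i j = a j i) →
        IsUnit A ∧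
        ‖LinearMap.toContinuousLinearMap (Matrix.toEuclideanLin A⁻¹)‖ ≤ M / δ :=
  stmt_3_general n C hclosed hcone hindep
end

section
/- Let $C_1, \dots, C_n \subseteq \mathbb{R}^n$ be linearly independent closed cones with axes avoiding the ball $B(0,\delta 2^{-k})$, and define $\hat{C}_j = (C_j \setminus B(0,\delta 2^{-k})) \times [-1,1] \subseteq \mathbb{R}^{n+1}$ for $1 \le j \le n$, and $\hat{C}_{n+1} = B(0, \kappa 2^{-k}) \times ([-1,-1/2] \cup [1/2,1])$. If $\kappa < \delta/(4Mn)$, where $M$ is the constant of the matrix-inverse bound for $C_1,\dots,C_n$, then any choice of vectors $v_j \in \hat{C}_j$, $1 \le j \le n+1$, is linearly independent in $\mathbb{R}^{n+1}$. -/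
open Set

/-!
If `∑ gⱼ vⱼ = 0`, the first components say that the coefficients `c = (g₁,…,gₙ)` solve
`A c = -g_{n+1} a_{n+1}`, where `A` has the columns `a₁,…,aₙ`; so
`‖c‖ ≤ (M/δ') |g_{n+1}| ‖a_{n+1}‖`, which is tiny. The last components give
`|g_{n+1}|/2 ≤ |g_{n+1} b_{n+1}| ≤ n ‖c‖`, and `κ < δ/(4Mn)` makes the two estimates
contradict each other unless `g_{n+1} = 0`, after which `c = 0` as well.
-/

theorem abs_sum_mul_le_card_mul_norm {n : ℕ} (c : EuclideanSpace ℝ (Fin n)) (b : Fin n → ℝ)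
    (hb : ∀ j, |b j| ≤ 1) : |∑ j, c j * b j| ≤ n * ‖c‖ :=
  calc |∑ j, c j * b j| ≤ ∑ j, |c j * b j| := Finset.abs_sum_le_sum_abs _ _
    _ ≤ ∑ _j : Fin n, ‖c‖ := Finset.sum_le_sum fun j _ => by
        rw [abs_mul, ← Real.norm_eq_abs]
        exact mul_le_of_le_one_right (norm_nonneg _) (hb j) |>.trans (PiLp.norm_apply_le c j)
    _ = n * ‖c‖ := by simp

theorem linearIndependent_of_norm_le_mul_norm_sum_smul {E : Type*} [NormedAddCommGroup E]
    [NormedSpace ℝ E] {n : ℕ} (v : Fin (n + 1) → E × ℝ) (L : ℝ)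
    (hL : ∀ c : EuclideanSpace ℝ (Fin n), ‖c‖ ≤ L * ‖∑ j, c j • (v j.castSucc).1‖)
    (hb : ∀ j : Fin n, |(v j.castSucc).2| ≤ 1) (hlast : 1 / 2 ≤ |(v (Fin.last n)).2|)
    (hsmall : n * L * ‖(v (Fin.last n)).1‖ < 1 / 2) :
    LinearIndependent ℝ v := by
  rw [Fintype.linearIndependent_iff]
  intro g hg
  set c : EuclideanSpace ℝ (Fin n) := WithLp.toLp 2 fun j => g j.castSucc
  set μ := g (Fin.last n)
  rw [Fin.sum_univ_castSucc] at hg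
  have hfst : ∑ j, c j • (v j.castSucc).1 = -(μ • (v (Fin.last n)).1) :=
    eq_neg_of_add_eq_zero_left (by simpa [c, μ, Prod.fst_sum] using congrArg Prod.fst hg)
  have hsnd : ∑ j, c j * (v j.castSucc).2 = -(μ * (v (Fin.last n)).2) :=
    eq_neg_of_add_eq_zero_left (by simpa [c, μ, Prod.snd_sum] using congrArg Prod.snd hg)
  have hc : ‖c‖ ≤ L * (|μ| * ‖(v (Fin.last n)).1‖) := by
    simpa [hfst, norm_smul] using hL c
  have hμ : μ = 0 := by
    have : |μ| / 2 ≤ |μ| * (n * L * ‖(v (Fin.last n)).1‖) :=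
      calc |μ| / 2 ≤ |μ * (v (Fin.last n)).2| := by
            rw [abs_mul]; nlinarith [abs_nonneg μ]
        _ = |∑ j, c j * (v j.castSucc).2| := by rw [hsnd, abs_neg]
        _ ≤ n * ‖c‖ := abs_sum_mul_le_card_mul_norm c _ hb
        _ ≤ n * (L * (|μ| * ‖(v (Fin.last n)).1‖)) := by gcongr
        _ = |μ| * (n * L * ‖(v (Fin.last n)).1‖) := by ring
    by_contra hne
    have := abs_pos.mpr hne
    nlinarith
  have hc0 : c = 0 := norm_le_zero_iff.mp (by simpa [hμ] using hc)
  intro i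
  induction i using Fin.lastCases with
  | last => exact hμ
  | cast j => simpa using congrArg (· j) hc0

theorem Matrix.norm_le_opNorm_inv_mul_norm_sum_smul {n : ℕ} (a : Fin n → EuclideanSpace ℝ (Fin n))
    (A : Matrix (Fin n) (Fin n) ℝ) (hA : ∀ i j, A i j = a j i) (hunit : IsUnit A)
    (c : EuclideanSpace ℝ (Fin n)) :
    ‖c‖ ≤ ‖LinearMap.toContinuousLinearMap (Matrix.toEuclideanLin A⁻¹)‖ *
      ‖∑ j, c j • a j‖ := by
  have hAc : Matrix.toEuclideanLin A c = ∑ j, c j • a j := by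
    ext i
    simp [Matrix.toLpLin_apply, Matrix.mulVec, dotProduct, hA, mul_comm]
  have hinv : Matrix.toEuclideanLin A⁻¹ (Matrix.toEuclideanLin A c) = c := by
    simp [Matrix.toLpLin_apply, Matrix.mulVec_mulVec,
      Matrix.nonsing_inv_mul A ((Matrix.isUnit_iff_isUnit_det A).mp hunit)]
  rw [← hAc]
  conv_lhs => rw [← hinv]
  exact (LinearMap.toContinuousLinearMap (Matrix.toEuclideanLin A⁻¹)).le_opNorm _

theorem stmt_4_general (n : ℕ) (hn : 0 < n) (k : ℕ) (δ κ M : ℝ)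
    (hδ : 0 < δ) (hM : 0 < M)
    (C : Fin n → Set (EuclideanSpace ℝ (Fin n)))
    (hMprop : ∀ δ' : ℝ, 0 < δ' →
      ∀ a : Fin n → EuclideanSpace ℝ (Fin n),
        (∀ i, a i ∈ C i) → (∀ i, δ' ≤ ‖a i‖) →
      ∀ A : Matrix (Fin n) (Fin n) ℝ, (∀ i j, A i j = a j i) →
        IsUnit A ∧
        ‖LinearMap.toContinuousLinearMap (Matrix.toEuclideanLin A⁻¹)‖ ≤ M / δ')
    (hκδ : κ < δ / (4 * M * n))
    (v : Fin (n + 1) → EuclideanSpace ℝ (Fin n) × ℝ)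
    (hv : ∀ j : Fin n, (v j.castSucc).1 ∈ C j ∧
      δ * (2 : ℝ) ^ (-(k : ℤ)) ≤ ‖(v j.castSucc).1‖ ∧
      (v j.castSucc).2 ∈ Icc (-1 : ℝ) 1)
    (hvlast : ‖(v (Fin.last n)).1‖ < κ * (2 : ℝ) ^ (-(k : ℤ)) ∧
      ((v (Fin.last n)).2 ∈ Icc (-1 : ℝ) (-(1/2)) ∪ Icc (1/2 : ℝ) 1)) :
    LinearIndependent ℝ v := by
  set t : ℝ := 2 ^ (-(k : ℤ))
  have ht : 0 < t := by positivity
  have hδ' : 0 < δ * t := by positivity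
  obtain ⟨hunit, hinv⟩ := hMprop _ hδ' (fun j => (v j.castSucc).1) (fun j => (hv j).1)
    (fun j => (hv j).2.1) (Matrix.of fun i j => (v j.castSucc).1 i) fun _ _ => rfl
  have hlast : 1 / 2 ≤ |(v (Fin.last n)).2| := by
    rcases hvlast.2 with ⟨_, h⟩ | ⟨h, _⟩
    · rw [abs_of_neg (by linarith)]; linarith
    · rwa [abs_of_pos (by linarith)]
  refine linearIndependent_of_norm_le_mul_norm_sum_smul v (M / (δ * t)) (fun c => ?_)
    (fun j => abs_le.mpr (hv j).2.2) hlast ?_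
  · exact (Matrix.norm_le_opNorm_inv_mul_norm_sum_smul _ _ (fun _ _ => rfl) hunit c).trans
      (mul_le_mul_of_nonneg_right hinv (norm_nonneg _))
  · have hκ' : 4 * M * n * κ < δ := (lt_div_iff₀' (by positivity)).mp hκδ
    calc n * (M / (δ * t)) * ‖(v (Fin.last n)).1‖ ≤ n * (M / (δ * t)) * (κ * t) := by
          gcongr; exact hvlast.1.le
      _ = n * M * κ / δ := by field_simp
      _ < 1 / 2 := by rw [div_lt_iff₀ hδ]; linarith

/-- Lifting linearly independent cones: given linearly independent closed cones
`C₁,…,Cₙ ⊆ ℝⁿ` with matrix-inverse constant `M`, the sets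
`Ĉⱼ = (Cⱼ \ B(0, δ2^{-k})) × [-1,1]` and
`Ĉ_{n+1} = B(0, κ2^{-k}) × ([-1,-1/2] ∪ [1/2,1])` in `ℝⁿ × ℝ` are such that any
choice of vectors `vⱼ ∈ Ĉⱼ` is linearly independent, provided `κ < δ/(4Mn)`. -/
theorem stmt_4 (n : ℕ) (hn : 0 < n) (k : ℕ) (δ κ M : ℝ)
    (hδ : 0 < δ) (hκ : 0 < κ) (hM : 0 < M)
    (C : Fin n → Set (EuclideanSpace ℝ (Fin n)))
    (hclosed : ∀ i, IsClosed (C i))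
    (hcone : ∀ i, ∀ r : ℝ, 0 ≤ r → ∀ v ∈ C i, r • v ∈ C i)
    (hindep : ∀ v : Fin n → EuclideanSpace ℝ (Fin n),
      (∀ i, v i ∈ C i) → (∀ i, v i ≠ 0) → LinearIndependent ℝ v)
    (hMprop : ∀ δ' : ℝ, 0 < δ' →
      ∀ a : Fin n → EuclideanSpace ℝ (Fin n),
        (∀ i, a i ∈ C i) → (∀ i, δ' ≤ ‖a i‖) →
      ∀ A : Matrix (Fin n) (Fin n) ℝ, (∀ i j, A i j = a j i) →
        IsUnit A ∧
        ‖LinearMap.toContinuousLinearMap (Matrix.toEuclideanLin A⁻¹)‖ ≤ M / δ')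
    (hκδ : κ < δ / (4 * M * n))
    (v : Fin (n + 1) → EuclideanSpace ℝ (Fin n) × ℝ)
    (hv : ∀ j : Fin n, (v j.castSucc).1 ∈ C j ∧
      δ * (2 : ℝ) ^ (-(k : ℤ)) ≤ ‖(v j.castSucc).1‖ ∧
      (v j.castSucc).2 ∈ Icc (-1 : ℝ) 1)
    (hvlast : ‖(v (Fin.last n)).1‖ < κ * (2 : ℝ) ^ (-(k : ℤ)) ∧
      ((v (Fin.last n)).2 ∈ Icc (-1 : ℝ) (-(1/2)) ∪ Icc (1/2 : ℝ) 1)) :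
    LinearIndependent ℝ v :=
  stmt_4_general n hn k δ κ M hδ hM C hMprop hκδ v hv hvlast
end

section
/- Let $Y$ be a Banach space and $\{\xi_i\}_{i \in \mathbb{N}} \subseteq \overline{B_{Y^*}}$ a countable norming family, i.e. $\|x\| = \sup_i \xi_i(x)$ for all $x \in Y$. Let $\epsilon > 0$ and $\gamma : D \to Y$ be Lipschitz on a Borel set $D \subseteq \mathbb{R}$. Then there is a Borel decomposition $D = N \cup E_1 \cup E_2 \cup \cdots$ with $\mathcal{L}^1(N) = 0$ such that for each $i$ and almost every $t \in E_i$, the derivative $(\xi_i \circ \gamma)'(t)$ exists and satisfies $(\xi_i \circ \gamma)'(t) \geq (1-\epsilon)\,\mathrm{Lip}(\gamma,t)$. -/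
open MeasureTheory Metric Set Filter
open scoped NNReal ENNReal

/-- The pointwise Lipschitz constant of `f` at `t` relative to the set `D`. -/
noncomputable def lipWithinAt {Y : Type*} [PseudoMetricSpace Y]
    (f : ℝ → Y) (D : Set ℝ) (t : ℝ) : ℝ :=
  Filter.limsup (fun s => dist (f s) (f t) / dist s t) (nhdsWithin t (D \ {t}))

/-!
Extend each `ξᵢ ∘ γ` to an `L`-Lipschitz function `Gᵢ : ℝ → ℝ` and put `M = supᵢ Gᵢ'`, a bounded
measurable function. As the `ξᵢ` are norming, the fundamental theorem of calculus for the `Gᵢ`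
gives `‖γ b - γ a‖ ≤ Φ b - Φ a` for `a ≤ b` in `D`, where `Φ = ∫ M`. So the difference quotients
of `γ` at `t` are dominated by those of `Φ`, and at every Lebesgue point of `M` this gives
`Lip(γ, t) ≤ M t`. A point `t` goes into `Eᵢ` when `Gᵢ'(t) ≥ (1 - ε') M t`, which happens for some
`i` as soon as `M t > 0`; where `M t ≤ 0` the difference quotients of `γ` tend to `0`, so both
`Lip(γ, t)` and the derivative of `ξᵢ ∘ γ` vanish.
-/

open scoped Topology

section PointwiseLipschitz

variable {Y : Type*} {D : Set ℝ} {t : ℝ}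

lemma lipWithinAt_eq_zero_of_tendsto [PseudoMetricSpace Y] {f : ℝ → Y}
    (h : Tendsto (fun s => dist (f s) (f t) / dist s t) (𝓝[D \ {t}] t) (𝓝 0)) :
    lipWithinAt f D t = 0 := by
  rcases (𝓝[D \ {t}] t).eq_or_neBot with hbot | _
  · simp [lipWithinAt, hbot, limsup_eq]
  · exact h.limsup_eq

lemma hasDerivWithinAt_zero_of_tendsto_dist_div_dist [NormedAddCommGroup Y] [NormedSpace ℝ Y]
    {f : ℝ → Y} (h : Tendsto (fun s => dist (f s) (f t) / dist s t) (𝓝[D \ {t}] t) (𝓝 0)) :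
    HasDerivWithinAt f 0 D t := by
  rw [hasDerivWithinAt_iff_tendsto_slope, tendsto_zero_iff_norm_tendsto_zero]
  refine h.congr fun s => ?_
  rw [slope, norm_smul, norm_inv, Real.norm_eq_abs, dist_eq_norm, Real.dist_eq, vsub_eq_sub,
    div_eq_inv_mul]

variable [PseudoMetricSpace Y] {f : ℝ → Y} {Φ : ℝ → ℝ} {m : ℝ}

lemma dist_div_dist_le_slope (hΦ : ∀ a ∈ D, ∀ b ∈ D, a ≤ b → dist (f a) (f b) ≤ Φ b - Φ a)
    {a b : ℝ} (ha : a ∈ D) (hb : b ∈ D) (hab : a ≠ b) :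
    dist (f a) (f b) / dist a b ≤ slope Φ a b := by
  wlog hlt : a < b generalizing a b
  · rw [dist_comm, dist_comm a, slope_comm]
    exact this hb ha hab.symm (hab.lt_or_gt.resolve_left hlt)
  rw [slope_def_field, Real.dist_eq, abs_of_neg (sub_neg.2 hlt), neg_sub]
  exact div_le_div_of_nonneg_right (hΦ a ha b hb hlt.le) (sub_pos.2 hlt).le

lemma eventually_dist_div_dist_le_slope
    (hΦ : ∀ a ∈ D, ∀ b ∈ D, a ≤ b → dist (f a) (f b) ≤ Φ b - Φ a) (ht : t ∈ D) :
    ∀ᶠ s in 𝓝[D \ {t}] t, dist (f s) (f t) / dist s t ≤ slope Φ t s := by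
  filter_upwards [self_mem_nhdsWithin] with s ⟨hs, hst⟩
  rw [dist_comm (f s), dist_comm s]
  exact dist_div_dist_le_slope hΦ ht hs (Ne.symm hst)

lemma lipWithinAt_le_of_hasDerivWithinAt
    (hΦ : ∀ a ∈ D, ∀ b ∈ D, a ≤ b → dist (f a) (f b) ≤ Φ b - Φ a) (ht : t ∈ D)
    (hd : HasDerivWithinAt Φ m D t) [(𝓝[D \ {t}] t).NeBot] :
    lipWithinAt f D t ≤ m := by
  have hslope := hasDerivWithinAt_iff_tendsto_slope.1 hd
  calc lipWithinAt f D t ≤ limsup (slope Φ t) (𝓝[D \ {t}] t) :=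
        limsup_le_limsup (eventually_dist_div_dist_le_slope hΦ ht)
          (isCoboundedUnder_le_of_le _ fun _ => div_nonneg dist_nonneg dist_nonneg)
          hslope.isBoundedUnder_le
    _ = m := hslope.limsup_eq

lemma lipWithinAt_nonneg_of_hasDerivWithinAt
    (hΦ : ∀ a ∈ D, ∀ b ∈ D, a ≤ b → dist (f a) (f b) ≤ Φ b - Φ a) (ht : t ∈ D)
    (hd : HasDerivWithinAt Φ m D t) [(𝓝[D \ {t}] t).NeBot] :
    0 ≤ lipWithinAt f D t :=
  le_limsup_of_frequently_le
    (Frequently.of_forall fun _ => div_nonneg dist_nonneg dist_nonneg)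
    ((hasDerivWithinAt_iff_tendsto_slope.1 hd).isBoundedUnder_le.mono_le
      (eventually_dist_div_dist_le_slope hΦ ht))

lemma tendsto_dist_div_dist_zero_of_hasDerivWithinAt
    (hΦ : ∀ a ∈ D, ∀ b ∈ D, a ≤ b → dist (f a) (f b) ≤ Φ b - Φ a) (ht : t ∈ D)
    (hd : HasDerivWithinAt Φ m D t) (hm : m ≤ 0) :
    Tendsto (fun s => dist (f s) (f t) / dist s t) (𝓝[D \ {t}] t) (𝓝 0) := by
  refine tendsto_order.2 ⟨fun a ha => Eventually.of_forall fun s =>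
    ha.trans_le (div_nonneg dist_nonneg dist_nonneg), fun a ha => ?_⟩
  filter_upwards [(hasDerivWithinAt_iff_tendsto_slope.1 hd).eventually
      (gt_mem_nhds (hm.trans_lt ha)), eventually_dist_div_dist_le_slope hΦ ht] with s hslope hle
  exact hle.trans_lt hslope

end PointwiseLipschitz

lemma exists_hasDerivWithinAt_ge_mul_lipWithinAt {Y : Type*} [NormedAddCommGroup Y]
    [NormedSpace ℝ Y] {f : ℝ → Y} {D : Set ℝ} {t : ℝ} {Φ : ℝ → ℝ} {m : ℝ}
    (hΦ : ∀ a ∈ D, ∀ b ∈ D, a ≤ b → dist (f a) (f b) ≤ Φ b - Φ a) (ht : t ∈ D)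
    (hd : HasDerivWithinAt Φ m D t) (ℓ : Y →L[ℝ] ℝ) {g c c' : ℝ}
    (hg : HasDerivWithinAt (fun s => ℓ (f s)) g D t) (hcc' : c ≤ c') (hc' : 0 ≤ c')
    (hcase : c' * m ≤ g ∨ m ≤ 0) :
    ∃ d', HasDerivWithinAt (fun s => ℓ (f s)) d' D t ∧ c * lipWithinAt f D t ≤ d' := by
  -- This case contains the isolated points of `D`, where the filter is `⊥`.
  by_cases h0 : Tendsto (fun s => dist (f s) (f t) / dist s t) (𝓝[D \ {t}] t) (𝓝 0)
  · refine ⟨0, ?_, by rw [lipWithinAt_eq_zero_of_tendsto h0, mul_zero]⟩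
    have := ℓ.hasFDerivAt.comp_hasDerivWithinAt t
      (hasDerivWithinAt_zero_of_tendsto_dist_div_dist h0)
    rwa [map_zero] at this
  · have : (𝓝[D \ {t}] t).NeBot := ⟨fun hbot => h0 (hbot ▸ tendsto_bot)⟩
    have hm : c' * m ≤ g := hcase.resolve_right fun hm =>
      h0 (tendsto_dist_div_dist_zero_of_hasDerivWithinAt hΦ ht hd hm)
    refine ⟨g, hg, ?_⟩
    calc c * lipWithinAt f D t
        ≤ c' * lipWithinAt f D t :=
          mul_le_mul_of_nonneg_right hcc' (lipWithinAt_nonneg_of_hasDerivWithinAt hΦ ht hd)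
      _ ≤ c' * m := mul_le_mul_of_nonneg_left (lipWithinAt_le_of_hasDerivWithinAt hΦ ht hd) hc'
      _ ≤ g := hm

lemma exists_mul_iSup_le_or_iSup_nonpos {ι : Type*} [Nonempty ι] (u : ι → ℝ) {c : ℝ}
    (hc : c < 1) :
    ∃ i, c * ⨆ j, u j ≤ u i ∨ ⨆ j, u j ≤ 0 := by
  rcases le_or_gt (⨆ j, u j) 0 with hle | hpos
  · exact ⟨Classical.arbitrary ι, Or.inr hle⟩
  · obtain ⟨i, hi⟩ := exists_lt_of_lt_ciSup (by nlinarith : c * ⨆ j, u j < ⨆ j, u j)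
    exact ⟨i, Or.inl hi.le⟩

section SupDeriv

noncomputable def supDeriv (G : ℕ → ℝ → ℝ) (t : ℝ) : ℝ := ⨆ i, deriv (G i) t

variable {G : ℕ → ℝ → ℝ} {L : ℝ≥0}

lemma bddAbove_range_deriv (hG : ∀ i, LipschitzWith L (G i)) (t : ℝ) :
    BddAbove (range fun i => deriv (G i) t) :=
  ⟨L, by rintro _ ⟨i, rfl⟩; exact (abs_le.1 (norm_deriv_le_of_lipschitz (hG i))).2⟩

lemma deriv_le_supDeriv (hG : ∀ i, LipschitzWith L (G i)) (i : ℕ) (t : ℝ) :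
    deriv (G i) t ≤ supDeriv G t :=
  le_ciSup (bddAbove_range_deriv hG t) i

lemma abs_supDeriv_le (hG : ∀ i, LipschitzWith L (G i)) (t : ℝ) : |supDeriv G t| ≤ L :=
  abs_le.2 ⟨(abs_le.1 (norm_deriv_le_of_lipschitz (hG 0))).1.trans (deriv_le_supDeriv hG 0 t),
    ciSup_le fun i => (abs_le.1 (norm_deriv_le_of_lipschitz (hG i))).2⟩

lemma measurable_supDeriv : Measurable (supDeriv G) :=
  Measurable.iSup fun i => measurable_deriv (G i)

lemma locallyIntegrable_supDeriv (hG : ∀ i, LipschitzWith L (G i)) :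
    LocallyIntegrable (supDeriv G) volume :=
  (locallyIntegrable_const (L : ℝ)).mono measurable_supDeriv.aestronglyMeasurable
    (Eventually.of_forall fun t => by simpa using abs_supDeriv_le hG t)

lemma sub_le_integral_supDeriv (hG : ∀ i, LipschitzWith L (G i)) (i : ℕ) {a b : ℝ}
    (hab : a ≤ b) : G i b - G i a ≤ ∫ t in a..b, supDeriv G t := by
  have hac := ((hG i).lipschitzOnWith (s := uIcc a b)).absolutelyContinuousOnInterval
  rw [← hac.integral_deriv_eq_sub]
  exact intervalIntegral.integral_mono_on hab hac.intervalIntegrable_deriv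
    (((locallyIntegrable_supDeriv hG).integrableOn_isCompact isCompact_uIcc).intervalIntegrable)
    fun t _ => deriv_le_supDeriv hG i t

end SupDeriv

lemma dist_le_integral_supDeriv {Y : Type*} [NormedAddCommGroup Y] [NormedSpace ℝ Y]
    (ξ : ℕ → (Y →L[ℝ] ℝ)) (hξnorm : ∀ x : Y, ‖x‖ = ⨆ i, ξ i x) {γ : ℝ → Y} {D : Set ℝ}
    {G : ℕ → ℝ → ℝ} {L : ℝ≥0} (hG : ∀ i, LipschitzWith L (G i))
    (hGγ : ∀ i, EqOn (fun s => ξ i (γ s)) (G i) D) {a b : ℝ} (ha : a ∈ D) (hb : b ∈ D)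
    (hab : a ≤ b) :
    dist (γ a) (γ b) ≤ ∫ t in a..b, supDeriv G t := by
  rw [dist_comm, dist_eq_norm, hξnorm]
  refine ciSup_le fun i => ?_
  have hb' : ξ i (γ b) = G i b := hGγ i hb
  have ha' : ξ i (γ a) = G i a := hGγ i ha
  rw [map_sub, hb', ha']
  exact sub_le_integral_supDeriv hG i hab

theorem stmt_5_general {Y : Type*} [NormedAddCommGroup Y] [NormedSpace ℝ Y]
    (ξ : ℕ → (Y →L[ℝ] ℝ)) (hξ1 : ∀ i, ‖ξ i‖ ≤ 1)
    (hξnorm : ∀ x : Y, ‖x‖ = ⨆ i, ξ i x)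
    (ε : ℝ) (hε : 0 < ε)
    (D : Set ℝ) (hD : MeasurableSet D)
    (γ : ℝ → Y) (L : ℝ≥0) (hγ : LipschitzOnWith L γ D) :
    ∃ (N : Set ℝ) (E : ℕ → Set ℝ), MeasurableSet N ∧ (∀ i, MeasurableSet (E i)) ∧
      D = N ∪ ⋃ i, E i ∧ volume N = 0 ∧
      ∀ i, ∀ᵐ t ∂(volume.restrict (E i)), ∃ d' : ℝ,
        HasDerivWithinAt (fun s => ξ i (γ s)) d' D t ∧
        (1 - ε) * lipWithinAt γ D t ≤ d' := by
  have hξγ : ∀ i, LipschitzOnWith L (fun s => ξ i (γ s)) D := fun i =>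
    ((ξ i).lipschitz.comp_lipschitzOnWith hγ).weaken
      (mul_le_of_le_one_left zero_le (by exact_mod_cast hξ1 i))
  choose G hG hGγ using fun i => (hξγ i).extend_real
  have hMint : ∀ a b, IntervalIntegrable (supDeriv G) volume a b := fun a b =>
    ((locallyIntegrable_supDeriv hG).integrableOn_isCompact isCompact_uIcc).intervalIntegrable
  let Φ : ℝ → ℝ := fun x => ∫ s in 0..x, supDeriv G s
  have hΦ : ∀ a ∈ D, ∀ b ∈ D, a ≤ b → dist (γ a) (γ b) ≤ Φ b - Φ a := fun a ha b hb hab => by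
    rw [intervalIntegral.integral_interval_sub_left (hMint 0 b) (hMint 0 a)]
    exact dist_le_integral_supDeriv ξ hξnorm hG hGγ ha hb hab
  let good : ℝ → Prop := fun t =>
    (∀ i, DifferentiableAt ℝ (G i) t) ∧ HasDerivAt Φ (supDeriv G t) t
  have hgood : ∀ᵐ t, good t :=
    (ae_all_iff.2 fun i => (hG i).ae_differentiableAt_of_real).and
      ((LocallyIntegrable.ae_hasDerivAt_integral (locallyIntegrable_supDeriv hG)).mono
        fun t ht => ht 0)
  let T := toMeasurable volume {t | ¬ good t}
  -- `ε' ≤ 1` keeps the factor `1 - ε'` nonnegative.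
  let ε' := min ε 1
  let E : ℕ → Set ℝ := fun i =>
    (D \ T) ∩ ({t | (1 - ε') * supDeriv G t ≤ deriv (G i) t} ∪ {t | supDeriv G t ≤ 0})
  have hE : ∀ i, MeasurableSet (E i) := fun i =>
    (hD.diff (measurableSet_toMeasurable _ _)).inter
      ((measurableSet_le (measurable_const.mul measurable_supDeriv) (measurable_deriv _)).union
        (measurableSet_le measurable_supDeriv measurable_const))
  refine ⟨D ∩ T, E, hD.inter (measurableSet_toMeasurable _ _), hE, ?_,
    measure_mono_null inter_subset_right (by rw [measure_toMeasurable]; exact hgood), fun i => ?_⟩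
  · refine subset_antisymm (fun t htD => ?_) (union_subset inter_subset_left
      (iUnion_subset fun i => sdiff_subset.trans' inter_subset_left))
    by_cases htT : t ∈ T
    · exact Or.inl ⟨htD, htT⟩
    · obtain ⟨i, hi⟩ := exists_mul_iSup_le_or_iSup_nonpos (fun i => deriv (G i) t)
        (by linarith [lt_min hε one_pos] : 1 - ε' < 1)
      exact Or.inr (mem_iUnion.2 ⟨i, ⟨htD, htT⟩, hi⟩)
  · refine ae_restrict_of_forall_mem (hE i) ?_
    rintro t ⟨⟨htD, htT⟩, hcase⟩
    obtain ⟨hdiff, hΦt⟩ : good t := not_not.1 fun h => htT (subset_toMeasurable _ _ h)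
    exact exists_hasDerivWithinAt_ge_mul_lipWithinAt hΦ htD hΦt.hasDerivWithinAt (ξ i)
      ((hdiff i).hasDerivAt.hasDerivWithinAt.congr (hGγ i) (hGγ i htD))
      (by linarith [min_le_left ε 1]) (by linarith [min_le_right ε 1]) hcase

/-- Decomposition of the domain of a Banach-valued Lipschitz curve: off a Lebesgue
null set, for each piece `Eᵢ` of the decomposition the composition with the norming
functional `ξᵢ` has derivative at least `(1-ε)` times the pointwise Lipschitz
constant, almost everywhere on `Eᵢ`. -/
theorem stmt_5 {Y : Type*} [NormedAddCommGroup Y] [NormedSpace ℝ Y] [CompleteSpace Y]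
    (ξ : ℕ → (Y →L[ℝ] ℝ)) (hξ1 : ∀ i, ‖ξ i‖ ≤ 1)
    (hξnorm : ∀ x : Y, ‖x‖ = ⨆ i, ξ i x)
    (ε : ℝ) (hε : 0 < ε)
    (D : Set ℝ) (hD : MeasurableSet D)
    (γ : ℝ → Y) (L : ℝ≥0) (hγ : LipschitzOnWith L γ D) :
    ∃ (N : Set ℝ) (E : ℕ → Set ℝ), MeasurableSet N ∧ (∀ i, MeasurableSet (E i)) ∧
      D = N ∪ ⋃ i, E i ∧ volume N = 0 ∧
      ∀ i, ∀ᵐ t ∂(volume.restrict (E i)), ∃ d' : ℝ,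
        HasDerivWithinAt (fun s => ξ i (γ s)) d' D t ∧
        (1 - ε) * lipWithinAt γ D t ≤ d' :=
  stmt_5_general ξ hξ1 hξnorm ε hε D hD γ L hγ
end

section
/- Let $Y$ be a Banach space with a countable norming family $\{\xi_i\} \subseteq \overline{B_{Y^*}}$, let $\gamma : D \to Y$ be $1$-Lipschitz on a Borel set $D \subseteq \mathbb{R}$, and $0 < \epsilon < 1$. Then for every positive-measure subset $S \subseteq D$ there exist an index $i$ and a positive-measure Borel subset $E \subseteq S$ such that $(\xi_i \circ \gamma)'(t) \geq (1-\epsilon)\,\mathrm{Lip}(\gamma,t)$ for all $t \in E$. -/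
open MeasureTheory Metric Set Filter
open scoped NNReal ENNReal

/-!
Extend `ξᵢ ∘ γ` to `1`-Lipschitz functions `gᵢ : ℝ → ℝ`. At a point `t ∈ D` of density of
`B = {x | ∀ i, gᵢ' x ≤ c}`, the fundamental theorem of calculus for Lipschitz functions gives
`ξᵢ (γ s - γ t) ≤ c |s - t| + O(|[s, t] \ B|) = (c + o(1)) |s - t|` uniformly in `i`, so
`Lip(γ, t) ≤ c` because the family is norming. Letting `c` run over the rationals,
`Lip(γ, ·) ≤ supᵢ gᵢ'` almost everywhere on `D`, while `|gᵢ'| ≤ Lip(γ, ·)` at accumulation points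
of `D`. Hence almost every point of `S` lies in one of the countably many measurable sets
`{(1 - ε) supⱼ gⱼ' ≤ gᵢ'}`, and one of them meets `S` in positive measure.
-/

open scoped Topology Interval

theorem ae_accPt_principal {X : Type*} [TopologicalSpace X] [SecondCountableTopology X]
    [MeasurableSpace X] (μ : Measure X) [NullSingletonClass μ] (s : Set X) :
    ∀ᵐ x ∂μ, x ∈ s → AccPt x (𝓟 s) := by
  set A := {x ∈ s | ¬AccPt x (𝓟 s)}
  have : DiscreteTopology A :=
    discreteTopology_of_noAccPts fun x hx hA => hx.2 (hA.mono (principal_mono.2 fun _ hy => hy.1))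
  have hA : A.Countable :=
    countable_coe_iff.1 (TopologicalSpace.separableSpace_iff_countable.1 inferInstance)
  filter_upwards [hA.ae_notMem μ] with x hx hxs
  exact not_not.1 fun h => hx ⟨hxs, h⟩

-- Density on the intervals `Ι s t` rather than on balls: the coefficient `K - c` in
-- `dist_le_of_forall_deriv_le` may be negative, so the measure cannot be enlarged there.
theorem ae_tendsto_measureReal_uIoc_diff_div {B : Set ℝ} (hB : MeasurableSet B) :
    ∀ᵐ t, t ∈ B → Tendsto (fun s => volume.real (Ι s t \ B) / dist s t) (𝓝[≠] t) (𝓝 0) := by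
  filter_upwards [Besicovitch.ae_tendsto_measure_inter_div_of_measurableSet volume hB.compl]
    with t ht htB
  rw [indicator_of_notMem (not_not.2 htB)] at ht
  have hball : Tendsto (fun r => volume.real (closedBall t r \ B) / r) (𝓝[>] 0) (𝓝 0) := by
    have h := ((ENNReal.tendsto_toReal ENNReal.zero_ne_top).comp ht).const_mul 2
    rw [ENNReal.toReal_zero, mul_zero] at h
    refine h.congr' ?_
    filter_upwards [self_mem_nhdsWithin] with r (hr : 0 < r)
    rw [Function.comp_apply, ENNReal.toReal_div, ← measureReal_def, ← measureReal_def,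
      Real.volume_real_closedBall hr.le, sdiff_eq, inter_comm]
    field_simp
  refine squeeze_zero' (Eventually.of_forall fun s => by positivity) ?_
    (hball.comp (tendsto_norm_sub_self_nhdsNE t))
  refine Eventually.of_forall fun s => div_le_div_of_nonneg_right (measureReal_mono
    (sdiff_subset_sdiff_left fun x hx => ?_)
    ((measure_mono sdiff_subset).trans_lt measure_closedBall_lt_top).ne) dist_nonneg
  simpa [Real.dist_eq, abs_sub_comm] using abs_sub_right_of_mem_uIcc (uIoc_subset_uIcc hx)

theorem LipschitzWith.deriv_le {g : ℝ → ℝ} {K : ℝ≥0} (hg : LipschitzWith K g) (x : ℝ) :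
    deriv g x ≤ K :=
  (le_abs_self _).trans (norm_deriv_le_of_lipschitz hg)

theorem LipschitzWith.sub_le_of_deriv_le {g : ℝ → ℝ} {K : ℝ≥0} (hg : LipschitzWith K g)
    {B : Set ℝ} (hB : MeasurableSet B) {c : ℝ} (hc : ∀ x ∈ B, deriv g x ≤ c) {a b : ℝ}
    (hab : a ≤ b) : g b - g a ≤ c * (b - a) + (K - c) * volume.real (Ioc a b \ B) := by
  have hderiv : ∀ x, deriv g x ≤ c + (K - c) * Bᶜ.indicator 1 x := by
    intro x
    by_cases hx : x ∈ B
    · simpa [hx] using hc x hx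
    · simpa [hx] using hg.deriv_le x
  have hind : Integrable (Bᶜ.indicator (1 : ℝ → ℝ)) (volume.restrict (Ioc a b)) :=
    (integrable_const 1).indicator hB.compl
  have hac := (hg.lipschitzOnWith (s := uIcc a b)).absolutelyContinuousOnInterval
  calc g b - g a = ∫ x in Ioc a b, deriv g x := by
        rw [← hac.integral_deriv_eq_sub, intervalIntegral.integral_of_le hab]
    _ ≤ ∫ x in Ioc a b, (c + (K - c) * Bᶜ.indicator 1 x) :=
        setIntegral_mono ((intervalIntegrable_iff_integrableOn_Ioc_of_le hab).1
          hac.intervalIntegrable_deriv) ((integrable_const c).add (hind.const_mul _)) hderiv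
    _ = c * (b - a) + (K - c) * volume.real (Ioc a b \ B) := by
        rw [integral_add (integrable_const c) (hind.const_mul _), integral_const_mul,
          integral_indicator_one hB.compl]
        simp [hab, sdiff_eq, inter_comm, mul_comm]

theorem exists_one_sub_mul_iSup_le {ι : Type*} [Nonempty ι] {f : ι → ℝ} {L ε : ℝ}
    (hε : 0 < ε) (hL : L ≤ ⨆ i, f i) (hf : ∀ i, |f i| ≤ L) :
    ∃ i, (1 - ε) * ⨆ i, f i ≤ f i := by
  rcases lt_or_ge 0 (⨆ i, f i) with hpos | hnonpos
  · obtain ⟨i, hi⟩ := exists_lt_of_lt_ciSup (show (1 - ε) * ⨆ i, f i < ⨆ i, f i by nlinarith)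
    exact ⟨i, hi.le⟩
  · obtain ⟨i⟩ := ‹Nonempty ι›
    have := abs_le.1 (hf i)
    exact ⟨i, by nlinarith⟩

theorem exists_measurableSet_pos_of_ae_exists_mem {α ι : Type*} [MeasurableSpace α] [Countable ι]
    {μ : Measure α} {S : Set α} (hS : MeasurableSet S) (hSpos : 0 < μ S) {A : ι → Set α}
    (hA : ∀ i, MeasurableSet (A i)) {P : α → Prop} (h : ∀ᵐ t ∂μ, t ∈ S → P t ∧ ∃ i, t ∈ A i) :
    ∃ i, ∃ E ⊆ S ∩ A i, MeasurableSet E ∧ 0 < μ E ∧ ∀ t ∈ E, P t := by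
  obtain ⟨G, hG, hGmeas, hGP⟩ := h.exists_measurable_mem
  have hcover : S ∩ G ⊆ ⋃ i, S ∩ A i ∩ G := fun t ht =>
    have ⟨i, hi⟩ := (hGP t ht.2 ht.1).2
    mem_iUnion.2 ⟨i, ⟨ht.1, hi⟩, ht.2⟩
  obtain ⟨i, hi⟩ := exists_measure_pos_of_not_measure_iUnion_null
    ((measure_inter_conull hG ▸ hSpos).trans_le (measure_mono hcover)).ne'
  exact ⟨i, _, inter_subset_left, (hS.inter (hA i)).inter hGmeas, hi,
    fun t ht => (hGP t ht.2 ht.1.1).1⟩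

section LipWithinAt

variable {Y ι : Type*} [PseudoMetricSpace Y] {γ : ℝ → Y} {D : Set ℝ}

theorem lipWithinAt_le_of_tendsto {t c : ℝ} (hacc : AccPt t (𝓟 D)) {φ : ℝ → ℝ}
    (hφ : Tendsto φ (𝓝[D \ {t}] t) (𝓝 c))
    (hle : ∀ᶠ s in 𝓝[D \ {t}] t, dist (γ s) (γ t) / dist s t ≤ φ s) :
    lipWithinAt γ D t ≤ c := by
  have := accPt_principal_iff_nhdsWithin.1 hacc
  rw [lipWithinAt, ← hφ.limsup_eq]
  exact limsup_le_limsup hle (isCoboundedUnder_le_of_le _ fun s => by positivity)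
    hφ.isBoundedUnder_le

theorem abs_le_lipWithinAt_of_hasDerivWithinAt {t : ℝ} {K : ℝ≥0} (hγ : LipschitzOnWith K γ D)
    (ht : t ∈ D) (hacc : AccPt t (𝓟 D)) {f : Y → ℝ} (hf : LipschitzWith 1 f) {d : ℝ}
    (hd : HasDerivWithinAt (fun s => f (γ s)) d D t) : |d| ≤ lipWithinAt γ D t := by
  have := accPt_principal_iff_nhdsWithin.1 hacc
  have hslope := (hasDerivWithinAt_iff_tendsto_slope.1 hd).abs
  rw [lipWithinAt, ← hslope.limsup_eq]
  refine limsup_le_limsup (Eventually.of_forall fun s => ?_) hslope.isCoboundedUnder_le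
    (isBoundedUnder_of_eventually_le (a := K) ?_)
  · change |slope _ t s| ≤ _
    rw [slope_def_field, abs_div, ← Real.dist_eq, ← Real.dist_eq]
    exact div_le_div_of_nonneg_right (by simpa using hf.dist_le_mul (γ s) (γ t)) dist_nonneg
  · filter_upwards [self_mem_nhdsWithin] with s ⟨hsD, hst⟩
    rw [div_le_iff₀ (dist_pos.2 hst)]
    exact hγ.dist_le_mul s hsD t ht

variable [Nonempty ι] {g : ι → ℝ → ℝ} {K : ℝ≥0}

theorem dist_le_of_forall_deriv_le (hg : ∀ i, LipschitzWith K (g i))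
    (hγg : ∀ a ∈ D, ∀ b ∈ D, dist (γ b) (γ a) ≤ ⨆ i, (g i b - g i a))
    {B : Set ℝ} (hB : MeasurableSet B) {c : ℝ} (hc : ∀ i, ∀ x ∈ B, deriv (g i) x ≤ c)
    {s t : ℝ} (hs : s ∈ D) (ht : t ∈ D) :
    dist (γ s) (γ t) ≤ c * dist s t + (K - c) * volume.real (Ι s t \ B) := by
  wlog hts : t ≤ s generalizing s t
  · simpa [dist_comm, uIoc_comm] using this ht hs (le_of_not_ge hts)
  rw [Real.dist_eq, abs_of_nonneg (sub_nonneg.2 hts), uIoc_of_ge hts]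
  exact (hγg t ht s hs).trans (ciSup_le fun i => (hg i).sub_le_of_deriv_le hB (hc i) hts)

variable [Countable ι]

theorem ae_lipWithinAt_le_of_forall_deriv_le (hg : ∀ i, LipschitzWith K (g i))
    (hγg : ∀ a ∈ D, ∀ b ∈ D, dist (γ b) (γ a) ≤ ⨆ i, (g i b - g i a)) (c : ℝ) :
    ∀ᵐ t, t ∈ D → (∀ i, deriv (g i) t ≤ c) → lipWithinAt γ D t ≤ c := by
  set B := {x | ∀ i, deriv (g i) x ≤ c}
  have hB : MeasurableSet B := by
    simp only [B, ofPred_forall]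
    exact MeasurableSet.iInter fun i => measurableSet_le (measurable_deriv _) measurable_const
  filter_upwards [ae_accPt_principal volume D, ae_tendsto_measureReal_uIoc_diff_div hB]
    with t hacc hdens htD htB
  refine lipWithinAt_le_of_tendsto (hacc htD)
    (φ := fun s => c + (K - c) * (volume.real (Ι s t \ B) / dist s t)) ?_ ?_
  · simpa using tendsto_const_nhds.add (((hdens htB).const_mul (K - c)).mono_left
      (nhdsWithin_mono _ fun s hs => hs.2))
  · filter_upwards [self_mem_nhdsWithin] with s ⟨hsD, hst⟩
    have hd : 0 < dist s t := dist_pos.2 hst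
    rw [div_le_iff₀ hd]
    calc dist (γ s) (γ t) ≤ c * dist s t + (K - c) * volume.real (Ι s t \ B) :=
          dist_le_of_forall_deriv_le hg hγg hB (fun i x hx => hx i) hsD htD
      _ = _ := by field_simp

theorem ae_lipWithinAt_le_iSup_deriv (hg : ∀ i, LipschitzWith K (g i))
    (hγg : ∀ a ∈ D, ∀ b ∈ D, dist (γ b) (γ a) ≤ ⨆ i, (g i b - g i a)) :
    ∀ᵐ t, t ∈ D → lipWithinAt γ D t ≤ ⨆ i, deriv (g i) t := by
  filter_upwards [ae_all_iff.2 fun q : ℚ => ae_lipWithinAt_le_of_forall_deriv_le hg hγg q]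
    with t ht htD
  have hbdd : BddAbove (range fun i => deriv (g i) t) :=
    ⟨K, forall_mem_range.2 fun i => (hg i).deriv_le t⟩
  exact le_of_forall_lt_rat_imp_le fun q hq => ht q htD fun i => (le_ciSup hbdd i).trans hq.le

end LipWithinAt

theorem stmt_6_general {Y : Type*} [NormedAddCommGroup Y] [NormedSpace ℝ Y]
    (ξ : ℕ → (Y →L[ℝ] ℝ)) (hξ1 : ∀ i, ‖ξ i‖ ≤ 1)
    (hξnorm : ∀ x : Y, ‖x‖ = ⨆ i, ξ i x)
    (ε : ℝ) (hε0 : 0 < ε) (hε1 : ε < 1)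
    (D : Set ℝ)
    (γ : ℝ → Y) (hγ : LipschitzOnWith 1 γ D) :
    ∀ S : Set ℝ, S ⊆ D → MeasurableSet S → 0 < volume S →
      ∃ (i : ℕ) (E : Set ℝ), MeasurableSet E ∧ E ⊆ S ∧ 0 < volume E ∧
        ∀ t ∈ E, ∃ d' : ℝ,
          HasDerivWithinAt (fun s => ξ i (γ s)) d' D t ∧
          (1 - ε) * lipWithinAt γ D t ≤ d' := by
  intro S hSD hS hSpos
  have hξ : ∀ i, LipschitzWith 1 (ξ i) := fun i => (ξ i).lipschitz.weaken (by exact_mod_cast hξ1 i)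
  choose g hg hgD using fun i => ((hξ i).comp_lipschitzOnWith hγ).extend_real
  have hγg : ∀ a ∈ D, ∀ b ∈ D, dist (γ b) (γ a) ≤ ⨆ i, (g i b - g i a) := fun a ha b hb => by
    simp [dist_eq_norm, hξnorm, ← hgD _ ha, ← hgD _ hb]
  have hderiv : ∀ᵐ t, t ∈ D → ∀ i, HasDerivWithinAt (fun s => ξ i (γ s)) (deriv (g i) t) D t := by
    filter_upwards [ae_all_iff.2 fun i => (hg i).ae_differentiableAt] with t hdiff htD i
    exact (hdiff i).hasDerivAt.hasDerivWithinAt.congr (fun s hs => hgD i hs) (hgD i htD)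
  set M := fun t => ⨆ i, deriv (g i) t
  have hgood : ∀ᵐ t, t ∈ S → ((∀ i, HasDerivWithinAt (fun s => ξ i (γ s)) (deriv (g i) t) D t) ∧
      lipWithinAt γ D t ≤ M t) ∧ ∃ i, t ∈ {t | (1 - ε) * M t ≤ deriv (g i) t} := by
    filter_upwards [ae_lipWithinAt_le_iSup_deriv hg hγg, ae_accPt_principal volume D, hderiv]
      with t hlip hacc hdt htS
    have htD := hSD htS
    exact ⟨⟨hdt htD, hlip htD⟩, exists_one_sub_mul_iSup_le hε0 (hlip htD) fun i =>
      abs_le_lipWithinAt_of_hasDerivWithinAt hγ htD (hacc htD) (hξ i) (hdt htD i)⟩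
  have hM : Measurable M := Measurable.iSup fun i => measurable_deriv (g i)
  obtain ⟨i, E, hES, hE, hEpos, hEgood⟩ := exists_measurableSet_pos_of_ae_exists_mem hS hSpos
    (fun i => measurableSet_le (hM.const_mul (1 - ε)) (measurable_deriv (g i))) hgood
  refine ⟨i, E, hE, fun t ht => (hES ht).1, hEpos, fun t ht =>
    ⟨deriv (g i) t, (hEgood t ht).1 i, ?_⟩⟩
  calc (1 - ε) * lipWithinAt γ D t ≤ (1 - ε) * M t :=
        mul_le_mul_of_nonneg_left (hEgood t ht).2 (by linarith)
    _ ≤ deriv (g i) t := (hES ht).2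

/-- Key step: for a `1`-Lipschitz curve `γ` into a Banach space with countable norming
family `ξᵢ`, every positive-measure subset `S` of the domain contains a positive-measure
Borel subset on which some `(ξᵢ ∘ γ)'` is at least `(1-ε) Lip(γ,·)`. -/
theorem stmt_6 {Y : Type*} [NormedAddCommGroup Y] [NormedSpace ℝ Y] [CompleteSpace Y]
    (ξ : ℕ → (Y →L[ℝ] ℝ)) (hξ1 : ∀ i, ‖ξ i‖ ≤ 1)
    (hξnorm : ∀ x : Y, ‖x‖ = ⨆ i, ξ i x)
    (ε : ℝ) (hε0 : 0 < ε) (hε1 : ε < 1)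
    (D : Set ℝ) (hD : MeasurableSet D)
    (γ : ℝ → Y) (hγ : LipschitzOnWith 1 γ D) :
    ∀ S : Set ℝ, S ⊆ D → MeasurableSet S → 0 < volume S →
      ∃ (i : ℕ) (E : Set ℝ), MeasurableSet E ∧ E ⊆ S ∧ 0 < volume E ∧
        ∀ t ∈ E, ∃ d' : ℝ,
          HasDerivWithinAt (fun s => ξ i (γ s)) d' D t ∧
          (1 - ε) * lipWithinAt γ D t ≤ d' :=
  stmt_6_general ξ hξ1 hξnorm ε hε0 hε1 D γ hγ
end

section
/- Let $(X,\rho)$ be a metric space, $0 < \beta < 1$, $x, y \in X$, and $\mathcal{B}$ a collection of pairwise disjoint open balls each of diameter at most $\rho(x,y)$; for each $B \in \mathcal{B}$ fix points $x_B, y_B \in \beta B$. Let $(x_1, \dots, x_N)$ be an itinerary from $x$ to $y$ and $S \subseteq \{1, \dots, N-1\}$ the set of indices $i$ with $\{x_i, x_{i+1}\} = \{x_B, y_B\}$ for some $B \in \mathcal{B}$, and suppose consecutive indices in $S$ correspond to different balls of $\mathcal{B}$. If $\sum_{i \in S} \rho(x_i, x_{i+1}) > \beta\, \rho(x,y)$,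 then $\sum_{i \notin S} \rho(x_i, x_{i+1}) \geq \frac{1-\beta}{2\beta} \sum_{i \in S} \rho(x_i, x_{i+1})$. -/
open Metric Set Finset

/-!
Each shortcut segment `[x_i, x_{i+1}]` joins two points of a shrunk ball `βB`, so its length
is at most `2β r_B ≤ β ρ(x,y)`; the hypothesis on the total therefore forces at least two
shortcuts. Between two consecutive shortcuts, in balls `B ≠ B'`, the itinerary has to cross
from `βB` to `βB'`, which costs at least `(1-β)(r_B + r_{B'})`, i.e. at least `(1-β)/(2β)`
times the lengths of both shortcuts. Summing over consecutive pairs, every shortcut is paid for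
at least once by the gap following or preceding it.
-/

section Geometry

variable {X : Type*} [PseudoMetricSpace X]

lemma dist_le_two_mul_of_mem_ball {p q c : X} {r : ℝ} (hp : p ∈ ball c r) (hq : q ∈ ball c r) :
    dist p q ≤ 2 * r := by
  rw [mem_ball] at hp hq
  linarith [dist_triangle_right p q c]

lemma one_sub_mul_add_le_dist_of_mem_ball {p q c₁ c₂ : X} {β r₁ r₂ : ℝ}
    (hp : p ∈ ball c₁ (β * r₁)) (hq : q ∈ ball c₂ (β * r₂)) (hsep : r₁ + r₂ ≤ dist c₁ c₂) :
    (1 - β) * (r₁ + r₂) ≤ dist p q := by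
  rw [mem_ball] at hp hq
  linarith [dist_triangle4 c₁ p q c₂, dist_comm p c₁]

lemma mul_dist_add_dist_le_dist_of_mem_ball {p q p' q' c₁ c₂ : X} {β r₁ r₂ : ℝ}
    (hβ0 : 0 < β) (hβ1 : β ≤ 1)
    (hp : p ∈ ball c₁ (β * r₁)) (hq : q ∈ ball c₁ (β * r₁))
    (hp' : p' ∈ ball c₂ (β * r₂)) (hq' : q' ∈ ball c₂ (β * r₂))
    (hsep : r₁ + r₂ ≤ dist c₁ c₂) :
    (1 - β) / (2 * β) * (dist p q + dist p' q') ≤ dist q p' := calc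
  _ ≤ (1 - β) / (2 * β) * (2 * (β * r₁) + 2 * (β * r₂)) :=
    mul_le_mul_of_nonneg_left
      (add_le_add (dist_le_two_mul_of_mem_ball hp hq) (dist_le_two_mul_of_mem_ball hp' hq'))
      (div_nonneg (by linarith) (by linarith))
  _ = (1 - β) * (r₁ + r₂) := by field_simp
  _ ≤ dist q p' := one_sub_mul_add_le_dist_of_mem_ball hq hp' hsep

end Geometry

section GapSums

def IsConsecutive (S : Finset ℕ) (i j : ℕ) : Prop :=
  i ∈ S ∧ j ∈ S ∧ i < j ∧ ∀ m, i < m → m < j → m ∉ S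

lemma IsConsecutive.insert_of_forall_lt {s : Finset ℕ} {a i j : ℕ} (h : IsConsecutive s i j)
    (ha : ∀ x ∈ s, x < a) : IsConsecutive (insert a s) i j := by
  obtain ⟨hi, hj, hij, hmid⟩ := h
  refine ⟨mem_insert_of_mem hi, mem_insert_of_mem hj, hij, fun m him hmj hm => ?_⟩
  rcases mem_insert.1 hm with rfl | hm
  · exact absurd (ha j hj) (by omega)
  · exact hmid m him hmj hm

lemma isConsecutive_insert_of_forall_le {s : Finset ℕ} {a b : ℕ} (hb : b ∈ s)
    (hbmax : ∀ x ∈ s, x ≤ b) (ha : ∀ x ∈ s, x < a) : IsConsecutive (insert a s) b a := by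
  refine ⟨mem_insert_of_mem hb, mem_insert_self a s, ha b hb, fun m hbm hma hm => ?_⟩
  rcases mem_insert.1 hm with rfl | hm
  · omega
  · exact absurd (hbmax m hm) (by omega)

variable {d : ℕ → ℝ} {c : ℝ}

lemma mul_sum_insert_le_sum_range_sdiff (hd : ∀ i, 0 ≤ d i) {s : Finset ℕ} {a b : ℕ}
    (hbmax : ∀ x ∈ s, x ≤ b) (hba : b < a) (hgap : c * (d b + d a) ≤ ∑ m ∈ Ioo b a, d m)
    (hs : c * ∑ i ∈ s, d i ≤ ∑ m ∈ range b \ s, d m + c * d b) :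
    c * ∑ i ∈ insert a s, d i ≤ ∑ m ∈ range a \ insert a s, d m := by
  have ha : a ∉ s := fun h => (hbmax a h).not_gt hba
  have hdisj : Disjoint (range b \ s) (Ioo b a) := by
    rw [Finset.disjoint_left]
    intro m h1 h2
    simp only [Finset.mem_sdiff, Finset.mem_range, Finset.mem_Ioo] at h1 h2
    omega
  have hsub : range b \ s ∪ Ioo b a ⊆ range a \ insert a s := by
    intro m hm
    simp only [Finset.mem_union, Finset.mem_sdiff, Finset.mem_range, Finset.mem_Ioo,
      Finset.mem_insert, not_or] at hm ⊢
    rcases hm with ⟨hmb, hms⟩ | ⟨hbm, hma⟩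
    · exact ⟨by omega, by omega, hms⟩
    · exact ⟨hma, by omega, fun h => absurd (hbmax m h) (by omega)⟩
  calc c * ∑ i ∈ insert a s, d i = c * ∑ i ∈ s, d i + c * d a := by
        rw [sum_insert ha]; ring
    _ ≤ ∑ m ∈ range b \ s, d m + ∑ m ∈ Ioo b a, d m := by linarith
    _ = ∑ m ∈ range b \ s ∪ Ioo b a, d m := (sum_union hdisj).symm
    _ ≤ ∑ m ∈ range a \ insert a s, d m := sum_le_sum_of_subset_of_nonneg hsub fun _ _ _ => hd _

/-- The maximum `b` stays unpaid: only a gap after it could pay for it. -/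
lemma mul_sum_le_sum_range_sdiff_add (hd : ∀ i, 0 ≤ d i) (hc : 0 ≤ c) (S : Finset ℕ)
    (hgap : ∀ i j, IsConsecutive S i j → c * (d i + d j) ≤ ∑ m ∈ Ioo i j, d m)
    {b : ℕ} (hb : b ∈ S) (hbmax : ∀ x ∈ S, x ≤ b) :
    c * ∑ i ∈ S, d i ≤ ∑ m ∈ range b \ S, d m + c * d b := by
  induction S using Finset.induction_on_max generalizing b with
  | empty => simp at hb
  | insert a s ha ih =>
    obtain rfl : b = a := by
      rcases mem_insert.1 hb with rfl | hb
      · rfl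
      · exact absurd (hbmax a (mem_insert_self a s)) (ha b hb).not_ge
    rcases s.eq_empty_or_nonempty with rfl | hs
    · simpa using sum_nonneg fun m _ => hd m
    have hsmax := s.max'_mem hs
    have key := mul_sum_insert_le_sum_range_sdiff hd (s.le_max' · ·) (ha _ hsmax)
      (hgap _ _ (isConsecutive_insert_of_forall_le hsmax (s.le_max' · ·) ha))
      (ih (fun i j h => hgap i j (h.insert_of_forall_lt ha)) hsmax (s.le_max' · ·))
    linarith [mul_nonneg hc (hd b)]

theorem mul_sum_le_sum_range_sdiff (hd : ∀ i, 0 ≤ d i) (hc : 0 ≤ c) {S : Finset ℕ} {N : ℕ}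
    (hSN : S ⊆ range N) (hS : 2 ≤ #S)
    (hgap : ∀ i j, IsConsecutive S i j → c * (d i + d j) ≤ ∑ m ∈ Ioo i j, d m) :
    c * ∑ i ∈ S, d i ≤ ∑ m ∈ range N \ S, d m := by
  have hne : S.Nonempty := card_pos.1 (by omega)
  set a := S.max' hne
  have haS : a ∈ S := S.max'_mem hne
  set s := S.erase a
  have hs : s.Nonempty := card_pos.1 (by rw [card_erase_of_mem haS]; omega)
  have hsa : ∀ x ∈ s, x < a := fun x hx =>
    (S.le_max' x (mem_of_mem_erase hx)).lt_of_ne (ne_of_mem_erase hx)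
  have hS' : insert a s = S := insert_erase haS
  have hsmax := s.max'_mem hs
  have key := mul_sum_insert_le_sum_range_sdiff hd (s.le_max' · ·) (hsa _ hsmax)
    (hgap _ _ (hS' ▸ isConsecutive_insert_of_forall_le hsmax (s.le_max' · ·) hsa))
    (mul_sum_le_sum_range_sdiff_add hd hc s
      (fun i j h => hgap i j (hS' ▸ h.insert_of_forall_lt hsa)) hsmax (s.le_max' · ·))
  rw [hS'] at key
  refine key.trans (sum_le_sum_of_subset_of_nonneg ?_ fun _ _ _ => hd _)
  exact sdiff_subset_sdiff (range_subset_range.2 (mem_range.1 (hSN haS)).le) le_rfl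

end GapSums

theorem stmt_8_general {X : Type*} [MetricSpace X] (β : ℝ) (hβ0 : 0 < β) (hβ1 : β < 1)
    (x y : X) {ι : Type*} (ctr : ι → X) (rad : ι → ℝ)
    (hsep : ∀ i j, i ≠ j → rad i + rad j ≤ dist (ctr i) (ctr j))
    (hdiam : ∀ i, 2 * rad i ≤ dist x y)
    (xB yB : ι → X)
    (hxB : ∀ i, xB i ∈ ball (ctr i) (β * rad i))
    (hyB : ∀ i, yB i ∈ ball (ctr i) (β * rad i))
    (N : ℕ) (z : ℕ → X)
    (S : Finset ℕ) (hSsub : S ⊆ Finset.range N) (ballOf : ℕ → ι)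
    (hS : ∀ i ∈ S, ({z i, z (i + 1)} : Set X) = {xB (ballOf i), yB (ballOf i)})
    (hconsec : ∀ i ∈ S, ∀ j ∈ S, i < j → (∀ m, i < m → m < j → m ∉ S) →
      ballOf i ≠ ballOf j)
    (hbig : β * dist x y < ∑ i ∈ S, dist (z i) (z (i + 1))) :
    ((1 - β) / (2 * β)) * ∑ i ∈ S, dist (z i) (z (i + 1)) ≤
      ∑ i ∈ Finset.range N \ S, dist (z i) (z (i + 1)) := by
  have hends : ∀ i ∈ S, z i ∈ ball (ctr (ballOf i)) (β * rad (ballOf i)) ∧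
      z (i + 1) ∈ ball (ctr (ballOf i)) (β * rad (ballOf i)) := fun i hi =>
    Set.pair_subset_iff.1 (hS i hi ▸ Set.pair_subset (hxB _) (hyB _))
  have hcard : 2 ≤ #S := by
    by_contra! h
    have hsum := sum_le_card_nsmul S (fun i => dist (z i) (z (i + 1))) (β * dist x y) fun i hi =>
      (dist_le_two_mul_of_mem_ball (hends i hi).1 (hends i hi).2).trans
        (by nlinarith [hdiam (ballOf i)])
    have : (#S : ℝ) ≤ 1 := by exact_mod_cast (by omega : #S ≤ 1)
    rw [nsmul_eq_mul] at hsum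
    nlinarith [mul_nonneg hβ0.le (dist_nonneg : 0 ≤ dist x y)]
  refine mul_sum_le_sum_range_sdiff (fun _ => dist_nonneg)
    (div_nonneg (by linarith) (by linarith)) hSsub hcard ?_
  rintro i j ⟨hi, hj, hij, hmid⟩
  calc _ ≤ dist (z (i + 1)) (z j) :=
        mul_dist_add_dist_le_dist_of_mem_ball hβ0 hβ1.le (hends i hi).1 (hends i hi).2
          (hends j hj).1 (hends j hj).2 (hsep _ _ (hconsec i hi j hj hij hmid))
    _ ≤ ∑ m ∈ Ioo i j, dist (z m) (z (m + 1)) := by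
        rw [← Finset.Ico_add_one_left_eq_Ioo]
        exact dist_le_Ico_sum_dist z hij

/-- Lemma on itineraries using shortcuts inside well-separated balls: if the total
`ρ`-length of the shortcut segments exceeds `β ρ(x,y)`, then the non-shortcut segments
have total length at least `((1-β)/(2β))` times that of the shortcut segments. -/
theorem stmt_8 {X : Type*} [MetricSpace X] (β : ℝ) (hβ0 : 0 < β) (hβ1 : β < 1)
    (x y : X) {ι : Type*} (ctr : ι → X) (rad : ι → ℝ) (hrad : ∀ i, 0 < rad i)
    (hdisj : ∀ i j, i ≠ j → Disjoint (ball (ctr i) (rad i)) (ball (ctr j) (rad j)))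
    (hsep : ∀ i j, i ≠ j → rad i + rad j ≤ dist (ctr i) (ctr j))
    (hdiam : ∀ i, 2 * rad i ≤ dist x y)
    (xB yB : ι → X)
    (hxB : ∀ i, xB i ∈ ball (ctr i) (β * rad i))
    (hyB : ∀ i, yB i ∈ ball (ctr i) (β * rad i))
    (N : ℕ) (z : ℕ → X) (hz0 : z 0 = x) (hzN : z N = y)
    (S : Finset ℕ) (hSsub : S ⊆ Finset.range N) (ballOf : ℕ → ι)
    (hS : ∀ i ∈ S, ({z i, z (i + 1)} : Set X) = {xB (ballOf i), yB (ballOf i)})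
    (hSonly : ∀ i ∈ Finset.range N, i ∉ S →
      ∀ b : ι, ({z i, z (i + 1)} : Set X) ≠ {xB b, yB b})
    (hconsec : ∀ i ∈ S, ∀ j ∈ S, i < j → (∀ m, i < m → m < j → m ∉ S) →
      ballOf i ≠ ballOf j)
    (hbig : β * dist x y < ∑ i ∈ S, dist (z i) (z (i + 1))) :
    ((1 - β) / (2 * β)) * ∑ i ∈ S, dist (z i) (z (i + 1)) ≤
      ∑ i ∈ Finset.range N \ S, dist (z i) (z (i + 1)) :=
  stmt_8_general β hβ0 hβ1 x y ctr rad hsep hdiam xB yB hxB hyB N z S hSsub ballOf hS hconsec hbig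
end

section
/- Let $(X, \rho)$ be a metric space, $c \le \rho$ a symmetric cost function, and $d$ the induced infimal-cost pseudometric. Define an alternating itinerary from $x$ to $y$ as an itinerary $(x_1,\dots,x_N)$ with $N$ even, where $(x_i, x_{i+1})$ is a shortcut (i.e. $c(x_i,x_{i+1}) < \rho(x_i,x_{i+1})$) if and only if $i$ is even, and each shortcut is used at most once. Then $d(x,y)$ equals the infimum of costs over alternating itineraries from $x$ to $y$. -/
/-!
By induction on the number of segments, every itinerary is replaced by an alternating one with
the same endpoints and no larger cost. Given an alternating itinerary `w` from `x` to `p` and a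
further segment `(p, y)`:
* if `y` already occurs in `w`, cut `w` there (padding with a trivial segment `(y, y)` if the
  cut ends on a shortcut); costs are nonnegative, so this is no more expensive;
* if `(p, y)` is a shortcut, append it followed by `(y, y)`; as `y` is new, it is not a repeat;
* otherwise `(q, p)` and `(p, y)` are non-shortcuts, where `q` precedes `p`, so by the triangle
  inequality `c q y ≤ dist q y ≤ c q p + c p y` and `p` can be dropped; if `(q, y)` happens to be a
  shortcut, it is taken between two trivial segments `(q, q)` and `(y, y)`.
-/

open Metric Set

/-- Cost of the itinerary `z 0, z 1, …, z N` (with `N` segments). -/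
def pathCost {X : Type*} (c : X → X → ℝ) (z : ℕ → X) (N : ℕ) : ℝ :=
  ∑ i ∈ Finset.range N, c (z i) (z (i + 1))

/-- The infimal cost over finite itineraries from `x` to `y`. -/
noncomputable def infCostDist {X : Type*} (c : X → X → ℝ) (x y : X) : ℝ :=
  sInf {r : ℝ | ∃ (N : ℕ) (z : ℕ → X), 1 ≤ N ∧ z 0 = x ∧ z N = y ∧ r = pathCost c z N}

/-- `z 0, …, z N` is an alternating itinerary: it has an even number of points
(`N = 2m - 1` segments), segment `i` (0-indexed) is a shortcut iff `i` is odd,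
and no shortcut is used twice. -/
def IsAlternating {X : Type*} [MetricSpace X] (c : X → X → ℝ) (z : ℕ → X) (N : ℕ) : Prop :=
  (∃ m : ℕ, 1 ≤ m ∧ N = 2 * m - 1) ∧
  (∀ i < N, (c (z i) (z (i + 1)) < dist (z i) (z (i + 1)) ↔ Odd i)) ∧
  (∀ i < N, ∀ j < N, Odd i → Odd j → i ≠ j →
    ({z i, z (i + 1)} : Set X) ≠ {z j, z (j + 1)})

open Function

section

variable {X : Type*}

section pathCost

variable (c : X → X → ℝ)

lemma pathCost_succ (z : ℕ → X) (N : ℕ) :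
    pathCost c z (N + 1) = pathCost c z N + c (z N) (z (N + 1)) :=
  Finset.sum_range_succ _ _

lemma pathCost_congr {z w : ℕ → X} {N : ℕ} (h : ∀ i ≤ N, z i = w i) :
    pathCost c z N = pathCost c w N :=
  Finset.sum_congr rfl fun i hi => by
    rw [Finset.mem_range] at hi
    rw [h i hi.le, h (i + 1) hi]

lemma pathCost_mono (hnn : ∀ x y, 0 ≤ c x y) (z : ℕ → X) {M N : ℕ} (h : M ≤ N) :
    pathCost c z M ≤ pathCost c z N :=
  Finset.sum_le_sum_of_subset_of_nonneg (Finset.range_subset_range.mpr h)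
    fun _ _ _ => hnn _ _

lemma pathCost_update_succ (z : ℕ → X) (n : ℕ) (y : X) :
    pathCost c (update z (n + 1) y) (n + 1) = pathCost c z n + c (z n) y := by
  rw [pathCost_succ, update_self, update_of_ne (by omega),
    pathCost_congr c fun i hi => update_of_ne (by omega) _ _]

lemma pathCost_extend_const (z : ℕ → X) (N : ℕ) (y : X) :
    pathCost c (fun t => if t ≤ N then z t else y) (N + 2) =
      pathCost c z N + c (z N) y + c y y := by
  have hprefix : pathCost c (fun t => if t ≤ N then z t else y) N = pathCost c z N :=
    pathCost_congr c fun i hi => if_pos hi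
  rw [pathCost_succ, pathCost_succ, hprefix]
  simp

end pathCost

variable [MetricSpace X] {c : X → X → ℝ}

lemma cost_self_eq_zero (hnn : ∀ x y, 0 ≤ c x y) (hle : ∀ x y, c x y ≤ dist x y) (a : X) :
    c a a = 0 :=
  le_antisymm (by simpa using hle a a) (hnn a a)

lemma not_cost_self_lt_dist (hnn : ∀ x y, 0 ≤ c x y) (a : X) : ¬ c a a < dist a a := by
  simpa using hnn a a

lemma isAlternating_const (hnn : ∀ x y, 0 ≤ c x y) (a : X) :
    IsAlternating c (fun _ => a) 1 := by
  refine ⟨⟨1, le_rfl, rfl⟩, fun i hi => ?_, fun i hi j hj _ _ hij => absurd (by omega) hij⟩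
  obtain rfl : i = 0 := by omega
  simpa using not_cost_self_lt_dist hnn a

namespace IsAlternating

variable {z : ℕ → X} {N : ℕ}

lemma odd (h : IsAlternating c z N) : Odd N := by
  obtain ⟨⟨m, hm, rfl⟩, -⟩ := h
  exact ⟨m - 1, by omega⟩

lemma of_le (h : IsAlternating c z N) {M : ℕ} (hMN : M ≤ N) (hM : Odd M) :
    IsAlternating c z M := by
  obtain ⟨k, rfl⟩ := hM
  exact ⟨⟨k + 1, by omega, by omega⟩, fun i hi => h.2.1 i (by omega),
    fun i hi j hj => h.2.2 i (by omega) j (by omega)⟩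

lemma update_last {n : ℕ} (h : IsAlternating c z (n + 1)) {y : X}
    (hy : ¬ c (z n) y < dist (z n) y) : IsAlternating c (update z (n + 1) y) (n + 1) := by
  obtain ⟨hN, hshort, hdistinct⟩ := h
  have hz : ∀ i < n + 1, update z (n + 1) y i = z i := fun i hi => update_of_ne (by omega) _ _
  have hn : ¬ Odd n := by
    obtain ⟨m, -, hm⟩ := hN
    rw [Nat.not_odd_iff_even]
    exact ⟨m - 1, by omega⟩
  refine ⟨hN, fun i hi => ?_, fun i hi j hj hi' hj' => ?_⟩
  · rcases (by omega : i < n ∨ i = n) with hin | rfl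
    · rw [hz i hi, hz (i + 1) (by omega)]
      exact hshort i hi
    · rw [hz i hi, update_self]
      exact iff_of_false hy hn
  · have hin : i ≠ n := fun h => hn (h ▸ hi')
    have hjn : j ≠ n := fun h => hn (h ▸ hj')
    rw [hz i hi, hz (i + 1) (by omega), hz j hj, hz (j + 1) (by omega)]
    exact hdistinct i hi j hj hi' hj'

lemma append_shortcut (hnn : ∀ x y, 0 ≤ c x y) (h : IsAlternating c z N) {y : X}
    (hs : c (z N) y < dist (z N) y) (hnew : ∀ i ≤ N, z i ≠ y) :
    IsAlternating c (fun t => if t ≤ N then z t else y) (N + 2) := by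
  have hN := h.odd
  obtain ⟨-, hshort, hdistinct⟩ := h
  set w : ℕ → X := fun t => if t ≤ N then z t else y
  have hw : ∀ i ≤ N, w i = z i := fun i hi => if_pos hi
  have hwN : ∀ i, N < i → w i = y := fun i hi => if_neg (by omega)
  refine ⟨?_, fun i hi => ?_, fun i hi j hj hi' hj' hij => ?_⟩
  · obtain ⟨k, rfl⟩ := hN
    exact ⟨k + 2, by omega, by omega⟩
  · rcases (by omega : i < N ∨ i = N ∨ i = N + 1) with hiN | rfl | rfl
    · rw [hw i hiN.le, hw (i + 1) hiN]
      exact hshort i hiN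
    · rw [hw i le_rfl, hwN _ (by omega)]
      exact iff_of_true hs hN
    · rw [hwN _ (by omega), hwN _ (by omega)]
      exact iff_of_false (not_cost_self_lt_dist hnn y) (by simpa [Nat.odd_add_one] using hN)
  · have hiN : i < N ∨ i = N := by
      rcases hi' with ⟨k, rfl⟩; rcases hN with ⟨l, rfl⟩; omega
    have hjN : j < N ∨ j = N := by
      rcases hj' with ⟨k, rfl⟩; rcases hN with ⟨l, rfl⟩; omega
    have hfresh : ∀ k < N, y ∉ ({w k, w (k + 1)} : Set X) := fun k hk => by
      rw [hw k hk.le, hw (k + 1) hk]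
      rintro (hy | hy) <;> exact hnew _ (by omega) hy.symm
    have hlast : y ∈ ({w N, w (N + 1)} : Set X) := by simp [hwN (N + 1) (by omega)]
    rcases hiN with hiN | rfl <;> rcases hjN with hjN | hjN
    · rw [hw i hiN.le, hw (i + 1) hiN, hw j hjN.le, hw (j + 1) hjN]
      exact hdistinct i hiN j hjN hi' hj' hij
    · exact fun he => hfresh i hiN (by rwa [he, hjN])
    · exact fun he => hfresh j hjN (he ▸ hlast)
    · exact absurd hjN.symm hij

end IsAlternating

def ExistsAlternatingLE (c : X → X → ℝ) (x y : X) (r : ℝ) : Prop :=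
  ∃ (N : ℕ) (w : ℕ → X), IsAlternating c w N ∧ w 0 = x ∧ w N = y ∧ pathCost c w N ≤ r

lemma ExistsAlternatingLE.mono {x y : X} {r s : ℝ} (h : ExistsAlternatingLE c x y r)
    (hrs : r ≤ s) : ExistsAlternatingLE c x y s :=
  let ⟨N, w, hw, h0, hN, hcost⟩ := h
  ⟨N, w, hw, h0, hN, hcost.trans hrs⟩

section

variable (hnn : ∀ x y, 0 ≤ c x y) (hle : ∀ x y, c x y ≤ dist x y)
include hnn hle

namespace IsAlternating

variable {z : ℕ → X} {N : ℕ}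

lemma existsAlternatingLE_truncate (h : IsAlternating c z N) {i : ℕ} (hi : i ≤ N) :
    ExistsAlternatingLE c (z 0) (z i) (pathCost c z N) := by
  rcases Nat.even_or_odd i with ⟨k, rfl⟩ | hodd
  · -- the cut ends on a shortcut: pad it with the trivial segment `(z i, z i)`
    have hk : k + k + 1 ≤ N := by obtain ⟨l, rfl⟩ := h.odd; omega
    refine ⟨k + k + 1, update z (k + k + 1) (z (k + k)),
      (h.of_le hk ⟨k, by ring⟩).update_last (not_cost_self_lt_dist hnn _),
      update_of_ne (by omega) _ _, update_self .., ?_⟩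
    rw [pathCost_update_succ, cost_self_eq_zero hnn hle, add_zero]
    exact pathCost_mono c hnn z hi
  · exact ⟨i, z, h.of_le hi hodd, rfl, rfl, pathCost_mono c hnn z hi⟩

lemma existsAlternatingLE_append_shortcut (h : IsAlternating c z N) {y : X}
    (hs : c (z N) y < dist (z N) y) (hnew : ∀ i ≤ N, z i ≠ y) :
    ExistsAlternatingLE c (z 0) y (pathCost c z N + c (z N) y) :=
  ⟨N + 2, _, h.append_shortcut hnn hs hnew, if_pos (Nat.zero_le N), if_neg (by omega), by
    rw [pathCost_extend_const, cost_self_eq_zero hnn hle, add_zero]⟩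

lemma existsAlternatingLE_snoc (h : IsAlternating c z N) (y : X) :
    ExistsAlternatingLE c (z 0) y (pathCost c z N + c (z N) y) := by
  by_cases hold : ∃ i ≤ N, z i = y
  · obtain ⟨i, hi, rfl⟩ := hold
    exact (h.existsAlternatingLE_truncate hnn hle hi).mono (le_add_of_nonneg_right (hnn _ _))
  push Not at hold
  by_cases hs : c (z N) y < dist (z N) y
  · exact h.existsAlternatingLE_append_shortcut hnn hle hs hold
  obtain ⟨n, rfl⟩ : ∃ n, N = n + 1 := by obtain ⟨k, rfl⟩ := h.odd; exact ⟨2 * k, rfl⟩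
  have hlast : ¬ c (z n) (z (n + 1)) < dist (z n) (z (n + 1)) := by
    rw [h.2.1 n (by omega), Nat.not_odd_iff_even]
    obtain ⟨k, hk⟩ := h.odd
    exact ⟨k, by omega⟩
  have hmerge : c (z n) y ≤ c (z n) (z (n + 1)) + c (z (n + 1)) y :=
    calc c (z n) y ≤ dist (z n) y := hle _ _
      _ ≤ dist (z n) (z (n + 1)) + dist (z (n + 1)) y := dist_triangle _ _ _
      _ ≤ c (z n) (z (n + 1)) + c (z (n + 1)) y := add_le_add (not_lt.mp hlast) (not_lt.mp hs)
  have hcost : pathCost c z n + c (z n) y ≤ pathCost c z (n + 1) + c (z (n + 1)) y := by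
    rw [pathCost_succ]
    linarith
  by_cases hs' : c (z n) y < dist (z n) y
  · -- step back from `z (n + 1)` to `z n` along a trivial segment, then take the shortcut
    have hback := h.update_last (not_cost_self_lt_dist hnn (z n))
    have hnew : ∀ i ≤ n + 1, update z (n + 1) (z n) i ≠ y := fun i hi => by
      rcases eq_or_ne i (n + 1) with rfl | hi'
      · rw [update_self]; exact hold n (by omega)
      · rw [update_of_ne hi']; exact hold i hi
    have := hback.existsAlternatingLE_append_shortcut hnn hle (y := y) (by rwa [update_self]) hnew
    rw [update_of_ne (by omega), update_self, pathCost_update_succ,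
      cost_self_eq_zero hnn hle, add_zero] at this
    exact this.mono hcost
  · exact ⟨n + 1, update z (n + 1) y, h.update_last hs', update_of_ne (by omega) _ _,
      update_self .., by rw [pathCost_update_succ]; exact hcost⟩

end IsAlternating

lemma existsAlternatingLE_pathCost (z : ℕ → X) (N : ℕ) :
    ExistsAlternatingLE c (z 0) (z N) (pathCost c z N) := by
  induction N with
  | zero =>
    refine ⟨1, fun _ => z 0, isAlternating_const hnn _, rfl, rfl, ?_⟩
    simp [pathCost, cost_self_eq_zero hnn hle]
  | succ N ih =>
    obtain ⟨M, w, hw, h0, hM, hcost⟩ := ih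
    have := hw.existsAlternatingLE_snoc hnn hle (z (N + 1))
    rw [h0, hM] at this
    exact this.mono (by rw [pathCost_succ]; linarith)

end

end

theorem stmt_10_general {X : Type*} [MetricSpace X] (c : X → X → ℝ)
    (hnn : ∀ x y, 0 ≤ c x y) (hle : ∀ x y, c x y ≤ dist x y) (x y : X) :
    infCostDist c x y =
      sInf {r : ℝ | ∃ (N : ℕ) (z : ℕ → X),
        IsAlternating c z N ∧ z 0 = x ∧ z N = y ∧ r = pathCost c z N} := by
  refine csInf_eq_csInf_of_forall_exists_le ?_ ?_
  · rintro r ⟨N, z, -, rfl, rfl, rfl⟩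
    obtain ⟨M, w, hw, h0, hM, hcost⟩ := existsAlternatingLE_pathCost hnn hle z N
    exact ⟨_, ⟨M, w, hw, h0, hM, rfl⟩, hcost⟩
  · rintro r ⟨N, z, hz, rfl, rfl, rfl⟩
    obtain ⟨k, rfl⟩ := hz.odd
    exact ⟨_, ⟨2 * k + 1, z, by omega, rfl, rfl, rfl⟩, le_rfl⟩

/-- The infimal-cost pseudometric equals the infimum of costs over alternating
itineraries. -/
theorem stmt_10 {X : Type*} [MetricSpace X] (c : X → X → ℝ)
    (hsym : ∀ x y, c x y = c y x) (hnn : ∀ x y, 0 ≤ c x y)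
    (hle : ∀ x y, c x y ≤ dist x y) (x y : X) :
    infCostDist c x y =
      sInf {r : ℝ | ∃ (N : ℕ) (z : ℕ → X),
        IsAlternating c z N ∧ z 0 = x ∧ z N = y ∧ r = pathCost c z N} :=
  stmt_10_general c hnn hle x y
end

section
/- Let $E$ be a metric space with $0 < \mathcal{H}^p(E) < \infty$ that is $p$-rectifiable, and let $f : F \to Y$ be a Lipschitz map from a subset $F \subseteq E$ to a metric space $Y$ with $\mathcal{H}^p(f(F)) > 0$. Assume every Lipschitz map from a Borel subset of $\mathbb{R}^p$ to a metric space admits a biLipschitz decomposition (decomposition into a null-image piece and countably many biLipschitz pieces). Then there exists a subset $A \subseteq F$ with $\mathcal{H}^p(A) > 0$ such that $f|_A$ is biLipschitz. -/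
/-!
Refine the rectifiable cover of `E`: decomposing each parametrization `g i` writes `E`, up to a
null set, as a countable union of biLipschitz images `G j '' T j`. Since `f` is Lipschitz it
maps null sets to null sets, so some `f '' (F ∩ G j '' T j)` has positive measure. On
`B = T j ∩ (G j)⁻¹' F` the composite `f ∘ G j` is Lipschitz with image of positive measure, and a
second decomposition gives a piece `S ⊆ B` of positive image measure on which `f ∘ G j` is
biLipschitz. Then `f` is biLipschitz on `A = G j '' S`, and `H^p(A) > 0` because `f(A)` has
positive measure.

The decomposition hypothesis only covers maps on Borel sets, while `B` need not be Borel; this is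
overcome by embedding `f(G j '' B)` isometrically in `ℓ^∞` (Kuratowski) and extending the
resulting map Lipschitz to all of `ℝ^p`.
-/

open MeasureTheory Metric Set
open scoped NNReal ENNReal lp

section BiLipschitz

variable {α β γ : Type*} [PseudoMetricSpace α] [PseudoMetricSpace β] [PseudoMetricSpace γ]

def BiLipschitzOn (f : α → β) (s : Set α) : Prop :=
  ∃ c C : ℝ, 0 < c ∧ ∀ x ∈ s, ∀ y ∈ s,
    c * dist x y ≤ dist (f x) (f y) ∧ dist (f x) (f y) ≤ C * dist x y

theorem BiLipschitzOn.mono {f : α → β} {s t : Set α} (hf : BiLipschitzOn f t) (hst : s ⊆ t) :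
    BiLipschitzOn f s :=
  let ⟨c, C, hc, hf⟩ := hf
  ⟨c, C, hc, fun x hx y hy => hf x (hst hx) y (hst hy)⟩

theorem BiLipschitzOn.exists_lipschitzOnWith {f : α → β} {s : Set α} (hf : BiLipschitzOn f s) :
    ∃ K, LipschitzOnWith K f s :=
  let ⟨_, _, _, hf⟩ := hf
  ⟨_, LipschitzOnWith.of_dist_le' fun x hx y hy => (hf x hx y hy).2⟩

theorem BiLipschitzOn.congr_dist {f : α → β} {g : α → γ} {s : Set α} (hf : BiLipschitzOn f s)
    (hfg : ∀ x ∈ s, ∀ y ∈ s, dist (g x) (g y) = dist (f x) (f y)) : BiLipschitzOn g s :=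
  let ⟨c, C, hc, hf⟩ := hf
  ⟨c, C, hc, fun x hx y hy => hfg x hx y hy ▸ hf x hx y hy⟩

theorem BiLipschitzOn.of_comp {g : α → β} {f : β → γ} {s : Set α} (hg : BiLipschitzOn g s)
    (hfg : BiLipschitzOn (f ∘ g) s) : BiLipschitzOn f (g '' s) := by
  obtain ⟨c₁, C₁, hc₁, hg⟩ := hg
  obtain ⟨c₂, C₂, hc₂, hfg⟩ := hfg
  have hM : 0 < max C₁ 1 := lt_max_of_lt_right one_pos
  refine ⟨c₂ / max C₁ 1, max C₂ 0 / c₁, div_pos hc₂ hM, ?_⟩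
  rintro _ ⟨x, hx, rfl⟩ _ ⟨y, hy, rfl⟩
  obtain ⟨hg_lo, hg_up⟩ := hg x hx y hy
  obtain ⟨hfg_lo, hfg_up⟩ := hfg x hx y hy
  have hg_up' : dist (g x) (g y) ≤ max C₁ 1 * dist x y :=
    hg_up.trans (by gcongr; exact le_max_left _ _)
  have hfg_up' : dist (f (g x)) (f (g y)) ≤ max C₂ 0 * dist x y :=
    hfg_up.trans (by gcongr; exact le_max_left _ _)
  constructor
  · calc c₂ / max C₁ 1 * dist (g x) (g y) ≤ c₂ / max C₁ 1 * (max C₁ 1 * dist x y) := by gcongr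
      _ = c₂ * dist x y := by field_simp
      _ ≤ _ := hfg_lo
  · calc dist (f (g x)) (f (g y)) ≤ max C₂ 0 * dist x y := hfg_up'
      _ = max C₂ 0 / c₁ * (c₁ * dist x y) := by field_simp
      _ ≤ max C₂ 0 / c₁ * dist (g x) (g y) := by gcongr

end BiLipschitz

theorem MeasureTheory.exists_measure_image_inter_pos {α β ι : Type*} [MeasurableSpace β]
    [Countable ι] {μ : Measure β} {f : α → β} {s : Set α} {u : ι → Set α}
    (hs : 0 < μ (f '' s)) (hnull : μ (f '' (s \ ⋃ i, u i)) = 0) :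
    ∃ i, 0 < μ (f '' (s ∩ u i)) := by
  by_contra! h
  have hcov : f '' s ⊆ f '' (s \ ⋃ i, u i) ∪ ⋃ i, f '' (s ∩ u i) := by
    rw [← image_iUnion, ← image_union, ← inter_iUnion, sdiff_union_inter]
  exact hs.ne' (measure_mono_null hcov (measure_union_null hnull
    (measure_iUnion_null fun i => nonpos_iff_eq_zero.1 (h i))))

section Hausdorff

variable {X Y Z : Type*} [MetricSpace X] [MetricSpace Y] [MetricSpace Z]
  [MeasurableSpace X] [BorelSpace X] [MeasurableSpace Y] [BorelSpace Y]
  [MeasurableSpace Z] [BorelSpace Z] {d : ℝ}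

theorem LipschitzOnWith.hausdorffMeasure_image_null {K : ℝ≥0} {f : X → Y} {s : Set X}
    (hf : LipschitzOnWith K f s) (hd : 0 ≤ d) (hs : μH[d] s = 0) : μH[d] (f '' s) = 0 :=
  nonpos_iff_eq_zero.1 <| (hf.hausdorffMeasure_image_le hd).trans_eq (by rw [hs, mul_zero])

omit [MetricSpace X] [MeasurableSpace X] [BorelSpace X] in
-- `f` factors through `g` on `s` by a `1`-Lipschitz map, namely `f ∘ invFunOn g s`.
theorem hausdorffMeasure_image_le_of_dist_le {f : X → Y} {g : X → Z} {s : Set X}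
    (hd : 0 ≤ d) (hfg : ∀ x ∈ s, ∀ y ∈ s, dist (f x) (f y) ≤ dist (g x) (g y)) :
    μH[d] (f '' s) ≤ μH[d] (g '' s) := by
  rcases s.eq_empty_or_nonempty with rfl | ⟨x₀, -⟩
  · simp
  have : Nonempty X := ⟨x₀⟩
  have hinv : ∀ x ∈ s, Function.invFunOn g s (g x) ∈ s ∧ g (Function.invFunOn g s (g x)) = g x :=
    fun x hx => Function.invFunOn_pos ⟨x, hx, rfl⟩
  have himage : (f ∘ Function.invFunOn g s) '' (g '' s) = f '' s := by
    rw [image_image]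
    refine image_congr fun x hx => dist_le_zero.1 ?_
    simpa [(hinv x hx).2] using hfg _ (hinv x hx).1 x hx
  have hlip : LipschitzOnWith 1 (f ∘ Function.invFunOn g s) (g '' s) := by
    refine LipschitzOnWith.of_dist_le_mul ?_
    rintro _ ⟨x, hx, rfl⟩ _ ⟨y, hy, rfl⟩
    simpa [(hinv x hx).2, (hinv y hy).2] using hfg _ (hinv x hx).1 _ (hinv y hy).1
  simpa only [himage, ENNReal.coe_one, ENNReal.one_rpow, one_mul] using
    hlip.hausdorffMeasure_image_le hd

end Hausdorff

theorem LipschitzOnWith.exists_lipschitzWith_lp_infty_dist_eq {X Y : Type*}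
    [PseudoMetricSpace X] [TopologicalSpace.SeparableSpace X] [MetricSpace Y]
    {K : ℝ≥0} {f : X → Y} {s : Set X} (hf : LipschitzOnWith K f s) :
    ∃ g : X → ℓ^∞(ℕ, ℝ), LipschitzWith K g ∧
      ∀ x ∈ s, ∀ y ∈ s, dist (g x) (g y) = dist (f x) (f y) := by
  classical
  have : TopologicalSpace.SeparableSpace (f '' s) := by
    rw [image_eq_range]
    exact (TopologicalSpace.isSeparable_range hf.continuousOn.domRestrict).separableSpace
  let f' : X → ℓ^∞(ℕ, ℝ) := fun x =>
    if hx : x ∈ s then kuratowskiEmbedding (f '' s) ⟨f x, mem_image_of_mem f hx⟩ else 0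
  have hf' : ∀ x ∈ s, ∀ y ∈ s, dist (f' x) (f' y) = dist (f x) (f y) := by
    intro x hx y hy
    simp only [f', dif_pos hx, dif_pos hy]
    rw [(kuratowskiEmbedding.isometry _).dist_eq, Subtype.dist_eq]
  obtain ⟨g, hg, hf'g⟩ := (LipschitzOnWith.of_dist_le_mul fun x hx y hy =>
    (hf' x hx y hy).trans_le (hf.dist_le_mul x hx y hy)).extend_lp_infty
  exact ⟨g, hg, fun x hx y hy => by rw [← hf'g hx, ← hf'g hy, hf' x hx y hy]⟩

def HasBiLipschitzDecompositions (X : Type) [MetricSpace X] [MeasurableSpace X] (d : ℝ) : Prop :=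
  ∀ (Z : Type) [MetricSpace Z] [MeasurableSpace Z] [BorelSpace Z],
    ∀ (A : Set X) (g : X → Z), MeasurableSet A → (∃ L : ℝ≥0, LipschitzOnWith L g A) →
      ∃ (N : Set X) (Es : ℕ → Set X), MeasurableSet N ∧ (∀ j, MeasurableSet (Es j)) ∧
        A = N ∪ ⋃ j, Es j ∧ μH[d] (g '' N) = 0 ∧ ∀ j, BiLipschitzOn g (Es j)

namespace HasBiLipschitzDecompositions

variable {X : Type} [MetricSpace X] [MeasurableSpace X] [TopologicalSpace.SeparableSpace X]
  {d : ℝ}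

theorem exists_biLipschitzOn_cover (hX : HasBiLipschitzDecompositions X d) (hd : 0 ≤ d)
    {Y : Type*} [MetricSpace Y] [MeasurableSpace Y] [BorelSpace Y]
    {K : ℝ≥0} {f : X → Y} {s : Set X} (hf : LipschitzOnWith K f s) :
    ∃ Es : ℕ → Set X, μH[d] (f '' (s \ ⋃ j, Es j)) = 0 ∧ ∀ j, BiLipschitzOn f (s ∩ Es j) := by
  obtain ⟨g, hg, hgf⟩ := hf.exists_lipschitzWith_lp_infty_dist_eq
  let : MeasurableSpace ℓ^∞(ℕ, ℝ) := borel _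
  have : BorelSpace ℓ^∞(ℕ, ℝ) := ⟨rfl⟩
  obtain ⟨N, Es, -, -, hcover, hN, hEs⟩ := hX _ univ g MeasurableSet.univ ⟨K, hg.lipschitzOnWith⟩
  refine ⟨Es, ?_, fun j => ((hEs j).mono inter_subset_right).congr_dist
    fun x hx y hy => (hgf x hx.1 y hy.1).symm⟩
  have hsN : s \ ⋃ j, Es j ⊆ s ∩ N := fun x hx =>
    ⟨hx.1, (hcover ▸ mem_univ x).resolve_right hx.2⟩
  refine measure_mono_null (image_mono hsN) (nonpos_iff_eq_zero.1 ?_)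
  calc μH[d] (f '' (s ∩ N)) ≤ μH[d] (g '' (s ∩ N)) :=
        hausdorffMeasure_image_le_of_dist_le hd fun x hx y hy => (hgf x hx.1 y hy.1).ge
    _ ≤ μH[d] (g '' N) := measure_mono (image_mono inter_subset_right)
    _ = 0 := hN

theorem exists_biLipschitzOn_refinement (hX : HasBiLipschitzDecompositions X d) (hd : 0 ≤ d)
    {E : Type*} [MetricSpace E] [MeasurableSpace E] [BorelSpace E]
    {A : ℕ → Set X} {g : ℕ → X → E} (hg : ∀ i, ∃ L : ℝ≥0, LipschitzOnWith L (g i) (A i))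
    (hA : μH[d] (univ \ ⋃ i, g i '' A i) = 0) :
    ∃ T : ℕ × ℕ → Set X, (∀ ik, BiLipschitzOn (g ik.1) (T ik)) ∧
      μH[d] (univ \ ⋃ ik : ℕ × ℕ, g ik.1 '' T ik) = 0 := by
  choose Es hEs_null hEs using fun i => hX.exists_biLipschitzOn_cover hd (hg i).choose_spec
  refine ⟨fun ik => A ik.1 ∩ Es ik.1 ik.2, fun ik => hEs ik.1 ik.2, ?_⟩
  refine measure_mono_null ?_ (measure_union_null hA (measure_iUnion_null hEs_null))
  rintro x ⟨-, hx⟩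
  by_cases hxA : x ∈ ⋃ i, g i '' A i
  · obtain ⟨i, a, ha, rfl⟩ := mem_iUnion.1 hxA
    refine Or.inr (mem_iUnion.2 ⟨i, a, ⟨ha, fun haEs => hx ?_⟩, rfl⟩)
    obtain ⟨k, hk⟩ := mem_iUnion.1 haEs
    exact mem_iUnion.2 ⟨(i, k), a, ⟨ha, hk⟩, rfl⟩
  · exact Or.inl ⟨mem_univ x, hxA⟩

theorem exists_biLipschitzOn_of_lipschitzOn (hX : HasBiLipschitzDecompositions X d) (hd : 0 ≤ d)
    {E Y : Type*} [MetricSpace E] [MeasurableSpace E] [BorelSpace E]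
    [MetricSpace Y] [MeasurableSpace Y] [BorelSpace Y] {ι : Type*} [Countable ι]
    {G : ι → X → E} {T : ι → Set X} (hG : ∀ i, BiLipschitzOn (G i) (T i))
    (hT : μH[d] (univ \ ⋃ i, G i '' T i) = 0) {F : Set E} {K : ℝ≥0} {f : E → Y}
    (hf : LipschitzOnWith K f F) (hfF : 0 < μH[d] (f '' F)) :
    ∃ A ⊆ F, 0 < μH[d] A ∧ BiLipschitzOn f A := by
  obtain ⟨i, hi⟩ := exists_measure_image_inter_pos hfF <|
    (hf.mono sdiff_subset).hausdorffMeasure_image_null hd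
      (measure_mono_null (sdiff_subset_sdiff_left (subset_univ F)) hT)
  set B := T i ∩ G i ⁻¹' F
  have hB : f '' (F ∩ G i '' T i) = (f ∘ G i) '' B := by
    rw [image_comp, image_inter_preimage, inter_comm]
  obtain ⟨L, hL⟩ := (hG i).exists_lipschitzOnWith
  have hfG : LipschitzOnWith (K * L) (f ∘ G i) B :=
    hf.comp (hL.mono inter_subset_left) fun x hx => hx.2
  obtain ⟨Es, hEs_null, hEs⟩ := hX.exists_biLipschitzOn_cover hd hfG
  obtain ⟨j, hj⟩ := exists_measure_image_inter_pos (hB ▸ hi) hEs_null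
  have hAF : G i '' (B ∩ Es j) ⊆ F := by
    rintro _ ⟨x, hx, rfl⟩
    exact hx.1.2
  refine ⟨G i '' (B ∩ Es j), hAF, ?_, ((hG i).mono ?_).of_comp (hEs j)⟩
  · rw [image_comp] at hj
    exact pos_iff_ne_zero.2 fun h0 => hj.ne' ((hf.mono hAF).hausdorffMeasure_image_null hd h0)
  · exact inter_subset_left.trans inter_subset_left

end HasBiLipschitzDecompositions

theorem stmt_11_general {E Y : Type} [MetricSpace E] [MeasurableSpace E] [BorelSpace E]
    [MetricSpace Y] [MeasurableSpace Y] [BorelSpace Y]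
    (p : ℕ)
    (hrect : ∃ (A : ℕ → Set (EuclideanSpace ℝ (Fin p)))
      (g : ℕ → EuclideanSpace ℝ (Fin p) → E),
      (∀ i, MeasurableSet (A i)) ∧
      (∀ i, ∃ L : ℝ≥0, LipschitzOnWith L (g i) (A i)) ∧
      μH[(p : ℝ)] ((univ : Set E) \ ⋃ i, g i '' A i) = 0)
    (hdecomp : ∀ (Z : Type) [MetricSpace Z] [MeasurableSpace Z] [BorelSpace Z],
      ∀ (A : Set (EuclideanSpace ℝ (Fin p))) (g : EuclideanSpace ℝ (Fin p) → Z),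
        MeasurableSet A → (∃ L : ℝ≥0, LipschitzOnWith L g A) →
        ∃ (N : Set (EuclideanSpace ℝ (Fin p))) (Es : ℕ → Set (EuclideanSpace ℝ (Fin p))),
          MeasurableSet N ∧ (∀ j, MeasurableSet (Es j)) ∧
          A = N ∪ ⋃ j, Es j ∧
          μH[(p : ℝ)] (g '' N) = 0 ∧
          ∀ j, ∃ cc CC : ℝ, 0 < cc ∧ ∀ x ∈ Es j, ∀ y ∈ Es j,
            cc * dist x y ≤ dist (g x) (g y) ∧ dist (g x) (g y) ≤ CC * dist x y)
    (F : Set E) (f : E → Y) (Lf : ℝ≥0) (hf : LipschitzOnWith Lf f F)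
    (himg : 0 < μH[(p : ℝ)] (f '' F)) :
    ∃ A : Set E, A ⊆ F ∧ 0 < μH[(p : ℝ)] A ∧
      ∃ cc CC : ℝ, 0 < cc ∧ ∀ x ∈ A, ∀ y ∈ A,
        cc * dist x y ≤ dist (f x) (f y) ∧ dist (f x) (f y) ≤ CC * dist x y := by
  obtain ⟨A, g, -, hg, hA⟩ := hrect
  have hX : HasBiLipschitzDecompositions (EuclideanSpace ℝ (Fin p)) p := hdecomp
  have hd : (0 : ℝ) ≤ p := Nat.cast_nonneg p
  obtain ⟨T, hT, hT_null⟩ := hX.exists_biLipschitzOn_refinement hd hg hA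
  exact hX.exists_biLipschitzOn_of_lipschitzOn hd hT hT_null hf himg

/-- If `E` is `p`-rectifiable with `0 < H^p(E) < ∞`, Lipschitz maps on Borel subsets of
`ℝ^p` always admit biLipschitz decompositions, and `f : F → Y` is Lipschitz on `F ⊆ E`
with `H^p(f(F)) > 0`, then `f` is biLipschitz on some subset `A ⊆ F` of positive
`H^p`-measure. -/
theorem stmt_11 {E Y : Type} [MetricSpace E] [MeasurableSpace E] [BorelSpace E]
    [MetricSpace Y] [MeasurableSpace Y] [BorelSpace Y]
    (p : ℕ) (hp : 0 < p)
    (hE0 : 0 < μH[(p : ℝ)] (univ : Set E)) (hE1 : μH[(p : ℝ)] (univ : Set E) < ⊤)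
    (hrect : ∃ (A : ℕ → Set (EuclideanSpace ℝ (Fin p)))
      (g : ℕ → EuclideanSpace ℝ (Fin p) → E),
      (∀ i, MeasurableSet (A i)) ∧
      (∀ i, ∃ L : ℝ≥0, LipschitzOnWith L (g i) (A i)) ∧
      μH[(p : ℝ)] ((univ : Set E) \ ⋃ i, g i '' A i) = 0)
    (hdecomp : ∀ (Z : Type) [MetricSpace Z] [MeasurableSpace Z] [BorelSpace Z],
      ∀ (A : Set (EuclideanSpace ℝ (Fin p))) (g : EuclideanSpace ℝ (Fin p) → Z),
        MeasurableSet A → (∃ L : ℝ≥0, LipschitzOnWith L g A) →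
        ∃ (N : Set (EuclideanSpace ℝ (Fin p))) (Es : ℕ → Set (EuclideanSpace ℝ (Fin p))),
          MeasurableSet N ∧ (∀ j, MeasurableSet (Es j)) ∧
          A = N ∪ ⋃ j, Es j ∧
          μH[(p : ℝ)] (g '' N) = 0 ∧
          ∀ j, ∃ cc CC : ℝ, 0 < cc ∧ ∀ x ∈ Es j, ∀ y ∈ Es j,
            cc * dist x y ≤ dist (g x) (g y) ∧ dist (g x) (g y) ≤ CC * dist x y)
    (F : Set E) (f : E → Y) (Lf : ℝ≥0) (hf : LipschitzOnWith Lf f F)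
    (himg : 0 < μH[(p : ℝ)] (f '' F)) :
    ∃ A : Set E, A ⊆ F ∧ 0 < μH[(p : ℝ)] A ∧
      ∃ cc CC : ℝ, 0 < cc ∧ ∀ x ∈ A, ∀ y ∈ A,
        cc * dist x y ≤ dist (f x) (f y) ∧ dist (f x) (f y) ≤ CC * dist x y :=
  stmt_11_general p hrect hdecomp F f Lf hf himg
end

section
/- Let $I \subseteq \mathbb{R}$ be a compact interval, $D_0 \subseteq I$ compact with $I$ the smallest interval containing $D_0$, and $\gamma : D_0 \to Y$ a Lipschitz map into a Banach space satisfying, for a linear functional $\xi \in Y^*$ and constants $\alpha > 0$, $b > 0$: $\xi(\gamma(t)) - \xi(\gamma(s)) \geq \alpha b (t - s)$ for all $s < t$ in $D_0$, and $\|\gamma(t)-\gamma(s)\| \le b|t-s|$. Let $\tilde{\gamma} : I \to Y$ be the extension of $\gamma$ that is affine on each connected component of $I \setminus D_0$. Then $\tilde{\gamma}$ is $b$-Lipschitz and satisfies $\xi(\tilde{\gamma}(t)) - \xi(\tilde{\gamma}(s)) \geq \alpha b (t-s) \geq \alpha \|\tilde{\gamma}(t) - \tilde{\gamma}(s)\|$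 for all $s < t$ in $I$; in particular, $\tilde{\gamma}$ is biLipschitz. -/
open Set

/-!
Increments `w` over a parameter length `L` with `a L ≤ ξ w` and `‖w‖ ≤ b L` form a convex
cone, so the bound adds up along consecutive intervals and passes from the endpoints of an
affine segment to each of its sub-segments.
The nearest points of `D₀` split any `s ≤ t` of the hull into a piece inside a gap, a piece
between points of `D₀`, and another piece inside a gap.
-/

section IncrementBound

variable {Y : Type*} [NormedAddCommGroup Y] [NormedSpace ℝ Y]

def IncrementBound (ξ : Y →L[ℝ] ℝ) (a b L : ℝ) (w : Y) : Prop :=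
  a * L ≤ ξ w ∧ ‖w‖ ≤ b * L

variable (ξ : Y →L[ℝ] ℝ) {a b : ℝ}

theorem IncrementBound.zero : IncrementBound ξ a b 0 0 := by
  simp [IncrementBound]

variable {ξ}

theorem IncrementBound.add {L₁ L₂ : ℝ} {w₁ w₂ : Y} (h₁ : IncrementBound ξ a b L₁ w₁)
    (h₂ : IncrementBound ξ a b L₂ w₂) : IncrementBound ξ a b (L₁ + L₂) (w₁ + w₂) :=
  ⟨by rw [map_add]; linarith [h₁.1, h₂.1], (norm_add_le _ _).trans (by linarith [h₁.2, h₂.2])⟩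

theorem IncrementBound.smul {L r : ℝ} {w : Y} (h : IncrementBound ξ a b L w) (hr : 0 ≤ r) :
    IncrementBound ξ a b (r * L) (r • w) := by
  refine ⟨?_, ?_⟩
  · rw [map_smul, smul_eq_mul, mul_left_comm]
    exact mul_le_mul_of_nonneg_left h.1 hr
  · rw [norm_smul, Real.norm_of_nonneg hr, mul_left_comm]
    exact mul_le_mul_of_nonneg_left h.2 hr

theorem IncrementBound.sub_trans {f : ℝ → Y} {u v w : ℝ}
    (h₁ : IncrementBound ξ a b (v - u) (f v - f u))
    (h₂ : IncrementBound ξ a b (w - v) (f w - f v)) :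
    IncrementBound ξ a b (w - u) (f w - f u) := by
  simpa only [sub_add_sub_cancel'] using h₁.add h₂

theorem IncrementBound.affine_sub {c d u v : ℝ} {p q : Y} (hcd : c < d) (huv : u ≤ v)
    (h : IncrementBound ξ a b (d - c) (q - p)) :
    IncrementBound ξ a b (v - u)
      ((((d - v) / (d - c)) • p + ((v - c) / (d - c)) • q) -
        (((d - u) / (d - c)) • p + ((u - c) / (d - c)) • q)) := by
  have hdc : d - c ≠ 0 := (sub_pos.2 hcd).ne'
  convert h.smul (div_nonneg (sub_nonneg.2 huv) (sub_pos.2 hcd).le) using 1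
  · field_simp
  · match_scalars <;> field_simp <;> ring

theorem incrementBound_sub_of_forall_lt {γ : ℝ → Y} {D : Set ℝ}
    (hlow : ∀ s ∈ D, ∀ t ∈ D, s < t → a * (t - s) ≤ ξ (γ t) - ξ (γ s))
    (hlip : ∀ s ∈ D, ∀ t ∈ D, ‖γ t - γ s‖ ≤ b * |t - s|) {s t : ℝ} (hs : s ∈ D) (ht : t ∈ D)
    (hst : s ≤ t) : IncrementBound ξ a b (t - s) (γ t - γ s) := by
  rcases hst.eq_or_lt with rfl | hlt
  · simpa using IncrementBound.zero ξ
  refine ⟨?_, ?_⟩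
  · simpa using hlow s hs t ht hlt
  · simpa [abs_of_pos (sub_pos.2 hlt)] using hlip s hs t ht

end IncrementBound

theorem LipschitzOnWith.of_norm_sub_le_of_le {Y : Type*} [SeminormedAddCommGroup Y]
    {f : ℝ → Y} {s : Set ℝ} {b : ℝ}
    (h : ∀ x ∈ s, ∀ y ∈ s, x ≤ y → ‖f y - f x‖ ≤ b * (y - x)) :
    LipschitzOnWith (Real.toNNReal b) f s := by
  refine LipschitzOnWith.of_dist_le_mul fun x hx y hy ↦ ?_
  rw [dist_eq_norm, Real.dist_eq]
  refine le_trans ?_ (mul_le_mul_of_nonneg_right (Real.le_coe_toNNReal b) (abs_nonneg _))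
  rcases le_total x y with hxy | hyx
  · rw [norm_sub_rev, abs_sub_comm, abs_of_nonneg (sub_nonneg.2 hxy)]
    exact h x hx y hy hxy
  · rw [abs_of_nonneg (sub_nonneg.2 hyx)]
    exact h y hy x hx hyx

theorem IsCompact.exists_gap_around {K : Set ℝ} (hK : IsCompact K) (hne : K.Nonempty) {t : ℝ}
    (ht : t ∈ Icc (sInf K) (sSup K)) :
    ∃ c ∈ K, ∃ d ∈ K, c ≤ t ∧ t ≤ d ∧ Ioo c d ∩ K = ∅ := by
  obtain ⟨c, ⟨hcK, hct⟩, hc⟩ := (hK.inter_right isClosed_Iic).exists_isGreatest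
    ⟨sInf K, hK.sInf_mem hne, ht.1⟩
  obtain ⟨d, ⟨hdK, htd⟩, hd⟩ := (hK.inter_right isClosed_Ici).exists_isLeast
    ⟨sSup K, hK.sSup_mem hne, ht.2⟩
  refine ⟨c, hcK, d, hdK, hct, htd, eq_empty_of_forall_notMem ?_⟩
  rintro x ⟨⟨hcx, hxd⟩, hxK⟩
  rcases le_total x t with hxt | htx
  · exact (hc ⟨hxK, hxt⟩).not_gt hcx
  · exact (hd ⟨hxK, htx⟩).not_gt hxd

theorem IsCompact.rel_of_rel_on_gaps {K : Set ℝ} (hK : IsCompact K) (hne : K.Nonempty)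
    {R : ℝ → ℝ → Prop} (htrans : ∀ {x y z}, R x y → R y z → R x z)
    (hmem : ∀ s ∈ K, ∀ t ∈ K, s ≤ t → R s t)
    (hgap : ∀ c ∈ K, ∀ d ∈ K, c < d → Ioo c d ∩ K = ∅ →
      ∀ u v, c ≤ u → u ≤ v → v ≤ d → R u v)
    {s t : ℝ} (hs : s ∈ Icc (sInf K) (sSup K)) (ht : t ∈ Icc (sInf K) (sSup K)) (hst : s ≤ t) :
    R s t := by
  have hclosedGap : ∀ c ∈ K, ∀ d ∈ K, Ioo c d ∩ K = ∅ →
      ∀ u v, c ≤ u → u ≤ v → v ≤ d → R u v := by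
    intro c hc d hd hcd u v hcu huv hvd
    rcases (hcu.trans (huv.trans hvd)).eq_or_lt with rfl | hlt
    · rw [show u = c by linarith, show v = c by linarith]
      exact hmem c hc c hc le_rfl
    · exact hgap c hc d hd hlt hcd u v hcu huv hvd
  obtain ⟨c, hc, d, hd, hcs, hsd, hgap_s⟩ := hK.exists_gap_around hne hs
  obtain ⟨c', hc', d', hd', hct, htd', hgap_t⟩ := hK.exists_gap_around hne ht
  rcases le_or_gt t d with htd | hdt
  · exact hclosedGap c hc d hd hgap_s s t hcs hst htd
  have hdc' : d ≤ c' := by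
    by_contra! h
    exact (eq_empty_iff_forall_notMem.1 hgap_t) d ⟨⟨h, hdt.trans_le htd'⟩, hd⟩
  exact htrans (hclosedGap c hc d hd hgap_s s d hcs hsd le_rfl)
    (htrans (hmem d hd c' hc' hdc') (hclosedGap c' hc' d' hd' hgap_t c' t le_rfl hct htd'))

theorem stmt_15_general {Y : Type*} [NormedAddCommGroup Y] [NormedSpace ℝ Y]
    (D0 : Set ℝ) (hD0c : IsCompact D0) (hD0ne : D0.Nonempty)
    (ξ : Y →L[ℝ] ℝ) (α b : ℝ) (hα : 0 < α)
    (γ γt : ℝ → Y)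
    (hlow : ∀ s ∈ D0, ∀ t ∈ D0, s < t → α * b * (t - s) ≤ ξ (γ t) - ξ (γ s))
    (hlip : ∀ s ∈ D0, ∀ t ∈ D0, ‖γ t - γ s‖ ≤ b * |t - s|)
    (hagree : ∀ t ∈ D0, γt t = γ t)
    (haffine : ∀ c d : ℝ, c ∈ D0 → d ∈ D0 → c < d → Ioo c d ∩ D0 = ∅ →
      ∀ t ∈ Icc c d, γt t = ((d - t) / (d - c)) • γ c + ((t - c) / (d - c)) • γ d) :
    LipschitzOnWith (Real.toNNReal b) γt (Icc (sInf D0) (sSup D0)) ∧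
    ∀ s ∈ Icc (sInf D0) (sSup D0), ∀ t ∈ Icc (sInf D0) (sSup D0), s < t →
      α * b * (t - s) ≤ ξ (γt t) - ξ (γt s) ∧
      α * ‖γt t - γt s‖ ≤ ξ (γt t) - ξ (γt s) := by
  set R : ℝ → ℝ → Prop := fun u v ↦ IncrementBound ξ (α * b) b (v - u) (γt v - γt u)
  have hmem : ∀ s ∈ D0, ∀ t ∈ D0, s ≤ t → R s t := fun s hs t ht hst ↦ by
    simpa [R, hagree s hs, hagree t ht] using incrementBound_sub_of_forall_lt hlow hlip hs ht hst
  have hgap : ∀ c ∈ D0, ∀ d ∈ D0, c < d → Ioo c d ∩ D0 = ∅ →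
      ∀ u v, c ≤ u → u ≤ v → v ≤ d → R u v := by
    intro c hc d hd hcd hempty u v hcu huv hvd
    simp only [R, haffine c d hc hd hcd hempty u ⟨hcu, huv.trans hvd⟩,
      haffine c d hc hd hcd hempty v ⟨hcu.trans huv, hvd⟩]
    exact (incrementBound_sub_of_forall_lt hlow hlip hc hd hcd.le).affine_sub hcd huv
  have hR : ∀ s ∈ Icc (sInf D0) (sSup D0), ∀ t ∈ Icc (sInf D0) (sSup D0), s ≤ t → R s t :=
    fun s hs t ht hst ↦ hD0c.rel_of_rel_on_gaps hD0ne IncrementBound.sub_trans hmem hgap hs ht hst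
  refine ⟨.of_norm_sub_le_of_le fun x hx y hy hxy ↦ (hR x hx y hy hxy).2, fun s hs t ht hst ↦ ?_⟩
  obtain ⟨hξ, hnorm⟩ := hR s hs t ht hst.le
  rw [map_sub] at hξ
  refine ⟨hξ, ?_⟩
  calc α * ‖γt t - γt s‖ ≤ α * (b * (t - s)) := mul_le_mul_of_nonneg_left hnorm hα.le
    _ = α * b * (t - s) := by ring
    _ ≤ ξ (γt t) - ξ (γt s) := hξ

/-- Piecewise-affine extension: if `γ` on a compact set `D₀` is `b`-Lipschitz and
`ξ ∘ γ` increases at rate at least `αb`, then the extension `γ̃` of `γ` to the smallest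
interval `I ⊇ D₀`, affine on each gap, is `b`-Lipschitz and satisfies
`ξ(γ̃(t)) - ξ(γ̃(s)) ≥ αb(t-s) ≥ α‖γ̃(t) - γ̃(s)‖` for `s < t` in `I`; in particular it
is biLipschitz. -/
theorem stmt_15 {Y : Type*} [NormedAddCommGroup Y] [NormedSpace ℝ Y]
    (D0 : Set ℝ) (hD0c : IsCompact D0) (hD0ne : D0.Nonempty)
    (ξ : Y →L[ℝ] ℝ) (α b : ℝ) (hα : 0 < α) (hb : 0 < b)
    (γ γt : ℝ → Y)
    (hlow : ∀ s ∈ D0, ∀ t ∈ D0, s < t → α * b * (t - s) ≤ ξ (γ t) - ξ (γ s))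
    (hlip : ∀ s ∈ D0, ∀ t ∈ D0, ‖γ t - γ s‖ ≤ b * |t - s|)
    (hagree : ∀ t ∈ D0, γt t = γ t)
    (haffine : ∀ c d : ℝ, c ∈ D0 → d ∈ D0 → c < d → Ioo c d ∩ D0 = ∅ →
      ∀ t ∈ Icc c d, γt t = ((d - t) / (d - c)) • γ c + ((t - c) / (d - c)) • γ d) :
    LipschitzOnWith (Real.toNNReal b) γt (Icc (sInf D0) (sSup D0)) ∧
    ∀ s ∈ Icc (sInf D0) (sSup D0), ∀ t ∈ Icc (sInf D0) (sSup D0), s < t →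
      α * b * (t - s) ≤ ξ (γt t) - ξ (γt s) ∧
      α * ‖γt t - γt s‖ ≤ ξ (γt t) - ξ (γt s) :=
  stmt_15_general D0 hD0c hD0ne ξ α b hα γ γt hlow hlip hagree haffine
end
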